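/- arXiv:1205.4183 — 6 statements merged into one kernel-verified Lean document; each statement's English description precedes it below -/
import Mathlib

section
/- (Theorem 2.1, estimate (3.2), conditional form.) Fix an integer k ≥ 0. Assume there exist constants c_1, c_2, c_3, c_4 ≥ 0 and ω ∈ (0,2) such that: (i) for all n ≥ 1, α_n := 1 − (n+1)·γ^{2(n+1)}/(π·λ_n²) satisfies 0 ≤ α_n ≤ c_1/n; (ii) |⟨p_l, G_m⟩| ≤ c_2/m whenever m > l ≥ 0; (iii) for all n ≥ k+1, |⟨z·q_{n−1}, p_{n−k}⟩| ≤ c_3/n, where q_{n−1} := G_n − (γ^{n+1}/λ_n)·p_n; (iv) |b_j| ≤ c_4/j^{1+ω} for all j ≥ 1. Then there exists a constant C (depending only on k, ω and c_1,…,c_4) such that for all n ≥ k+1, |√((n−k+1)/(n+1))·⟨z·p_n, p_{n−k}⟩ − b_k| ≤ C/√n. -/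
open MeasureTheory Polynomial

/-!
Put `u_n = γ^{n+1}/λ_n`, so that `z p_n = u_n⁻¹ (z G_n - z q_{n-1})`. Expanding `z G_n` by the
recurrence and pairing with `p_l`, `l = n - k`, the terms `b_j G_{n-j}` with `j > k` vanish by
orthogonality, the term `j = k` gives `b_k ⟨G_l, p_l⟩ = b_k u_l`, and all remaining terms are
`O(1/n)` by (ii) and (iii). Hence, with `s = √((l+1)/(n+1))` and `t = s u_l / u_n`,
`s ⟨z p_n, p_l⟩ - b_k = b_k (t - 1) + (s / u_n) O(1/n)`. By (i), `t² = (1 - α_l)/(1 - α_n)`, so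
`|t - 1| = O(1/n)`, and `(s / u_n)² = (l+1)/(π (1 - α_n)) = O(n)`. This gives the bound for all
large `n`, and the finitely many remaining `n` are absorbed into the constant.
-/

noncomputable def polyInner (G : Set ℂ) (f g : ℂ[X]) : ℂ :=
  ∫ z in G, f.eval z * starRingEnd ℂ (g.eval z)

section PolyInner

variable {G : Set ℂ}

theorem integrableOn_eval_mul_conj_eval (hG : Bornology.IsBounded G) (f g : ℂ[X]) :
    IntegrableOn (fun z => f.eval z * starRingEnd ℂ (g.eval z)) G :=
  ((f.continuous.mul (Complex.continuous_conj.comp g.continuous)).continuousOn.integrableOn_compact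
    hG.isCompact_closure).mono_set subset_closure

theorem polyInner_zero_left (g : ℂ[X]) : polyInner G 0 g = 0 := by
  simp [polyInner]

theorem polyInner_add_left (hG : Bornology.IsBounded G) (f₁ f₂ g : ℂ[X]) :
    polyInner G (f₁ + f₂) g = polyInner G f₁ g + polyInner G f₂ g := by
  simp only [polyInner, eval_add, add_mul]
  exact integral_add (integrableOn_eval_mul_conj_eval hG f₁ g)
    (integrableOn_eval_mul_conj_eval hG f₂ g)

theorem polyInner_sub_left (hG : Bornology.IsBounded G) (f₁ f₂ g : ℂ[X]) :
    polyInner G (f₁ - f₂) g = polyInner G f₁ g - polyInner G f₂ g := by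
  simp only [polyInner, eval_sub, sub_mul]
  exact integral_sub (integrableOn_eval_mul_conj_eval hG f₁ g)
    (integrableOn_eval_mul_conj_eval hG f₂ g)

theorem polyInner_sum_left {ι : Type*} (hG : Bornology.IsBounded G) (s : Finset ι)
    (f : ι → ℂ[X]) (g : ℂ[X]) :
    polyInner G (∑ i ∈ s, f i) g = ∑ i ∈ s, polyInner G (f i) g := by
  simp only [polyInner, eval_finsetSum, Finset.sum_mul]
  exact integral_finsetSum s fun i _ => integrableOn_eval_mul_conj_eval hG (f i) g

theorem polyInner_C_mul_left (c : ℂ) (f g : ℂ[X]) :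
    polyInner G (C c * f) g = c * polyInner G f g := by
  simp only [polyInner, eval_mul, eval_C, mul_assoc]
  exact integral_const_mul c _

theorem polyInner_X_mul_left (f g : ℂ[X]) :
    polyInner G (X * f) g = ∫ z in G, z * f.eval z * starRingEnd ℂ (g.eval z) := by
  simp only [polyInner, eval_mul, eval_X]

theorem norm_polyInner_comm (f g : ℂ[X]) : ‖polyInner G f g‖ = ‖polyInner G g f‖ := by
  rw [← Complex.norm_conj, polyInner, ← integral_conj]
  simp only [map_mul, Complex.conj_conj, mul_comm, polyInner]

end PolyInner

theorem degree_sub_C_mul_lt {R : Type*} [Field R] {f g : R[X]} {N : ℕ} (hf : f.degree ≤ N)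
    (hg : g.degree = N) : (f - C (f.coeff N / g.coeff N) * g).degree < N := by
  have hgN := coeff_ne_zero_of_eq_degree hg
  rw [degree_lt_iff_coeff_zero]
  intro m hm
  rcases hm.eq_or_lt with rfl | hlt
  · simp [hgN]
  · simp [coeff_eq_zero_of_degree_lt (hf.trans_lt (by exact_mod_cast hlt)),
      coeff_eq_zero_of_degree_lt (hg.trans_lt (by exact_mod_cast hlt))]

section Orthonormal

variable {G : Set ℂ} {p : ℕ → ℂ[X]}

theorem polyInner_eq_zero_of_degree_lt (hG : Bornology.IsBounded G)
    (hdeg : ∀ n, (p n).degree = n) {q : ℂ[X]} {N : ℕ}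
    (hq : ∀ m < N, polyInner G (p m) q = 0) {f : ℂ[X]} (hf : f.degree < N) :
    polyInner G f q = 0 := by
  induction N generalizing f with
  | zero =>
    rw [Nat.cast_zero, Nat.WithBot.lt_zero_iff, degree_eq_bot] at hf
    rw [hf, polyInner_zero_left]
  | succ N ih =>
    set a := f.coeff N / (p N).coeff N
    have hsplit := polyInner_add_left hG (f - C a * p N) (C a * p N) q
    rw [sub_add_cancel] at hsplit
    rw [hsplit, polyInner_C_mul_left, hq N N.lt_succ_self, mul_zero, add_zero,
      ih (fun m hm => hq m (hm.trans N.lt_succ_self))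
        (degree_sub_C_mul_lt (Order.le_of_lt_succ hf) (hdeg N))]

theorem polyInner_eq_coeff_div_of_degree_le (hG : Bornology.IsBounded G)
    (hdeg : ∀ n, (p n).degree = n)
    (horth : ∀ m n, polyInner G (p m) (p n) = if m = n then 1 else 0)
    {f : ℂ[X]} {N : ℕ} (hf : f.degree ≤ N) :
    polyInner G f (p N) = f.coeff N / (p N).coeff N := by
  set a := f.coeff N / (p N).coeff N
  have hsplit := polyInner_add_left hG (f - C a * p N) (C a * p N) (p N)
  rw [sub_add_cancel] at hsplit
  rw [hsplit, polyInner_C_mul_left, horth, if_pos rfl, mul_one,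
    polyInner_eq_zero_of_degree_lt hG hdeg (fun m hm => by rw [horth, if_neg hm.ne])
      (degree_sub_C_mul_lt hf (hdeg N)), zero_add]

end Orthonormal

section Recurrence

variable {G : Set ℂ} {p Gq : ℕ → ℂ[X]} {bs : ℕ → ℂ} {n k : ℕ}

theorem sum_mul_polyInner_eq_of_degree (hG : Bornology.IsBounded G)
    (hdeg : ∀ n, (p n).degree = n)
    (horth : ∀ m n, polyInner G (p m) (p n) = if m = n then 1 else 0)
    (hGqdeg : ∀ n, (Gq n).degree = n) (hk : k ≤ n) :
    ∑ j ∈ Finset.range (n + 1), bs j * polyInner G (Gq (n - j)) (p (n - k)) =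
      ∑ j ∈ Finset.range k, bs j * polyInner G (Gq (n - j)) (p (n - k)) +
        bs k * polyInner G (Gq (n - k)) (p (n - k)) := by
  rw [← Finset.sum_range_succ]
  refine (Finset.sum_subset (Finset.range_subset_range.mpr (by omega)) fun j hj hjk => ?_).symm
  simp only [Finset.mem_range, not_lt] at hj hjk
  rw [polyInner_eq_zero_of_degree_lt hG hdeg (fun m hm => by rw [horth, if_neg hm.ne])
    (by rw [hGqdeg]; exact_mod_cast (by omega : n - j < n - k)), mul_zero]

theorem polyInner_X_mul_eq_of_recurrence (hG : Bornology.IsBounded G)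
    (hdeg : ∀ n, (p n).degree = n)
    (horth : ∀ m n, polyInner G (p m) (p n) = if m = n then 1 else 0)
    (hGqdeg : ∀ n, (Gq n).degree = n) {c u : ℂ} (hu : u ≠ 0)
    (hrec : X * Gq n = C c * Gq (n + 1) + ∑ j ∈ Finset.range (n + 1), C (bs j) * Gq (n - j))
    (hk : k ≤ n) :
    polyInner G (X * p n) (p (n - k)) =
      u⁻¹ * (bs k * ((Gq (n - k)).coeff (n - k) / (p (n - k)).coeff (n - k)) +
        (c * polyInner G (Gq (n + 1)) (p (n - k)) +
          ∑ j ∈ Finset.range k, bs j * polyInner G (Gq (n - j)) (p (n - k)) -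
          polyInner G (X * (Gq n - C u * p n)) (p (n - k)))) := by
  have hXp : X * p n = C u⁻¹ * (X * Gq n - X * (Gq n - C u * p n)) := by
    have : C u⁻¹ * C u = 1 := by rw [← C_mul, inv_mul_cancel₀ hu, C_1]
    linear_combination (-(X * p n)) * this
  rw [hXp, polyInner_C_mul_left, polyInner_sub_left hG, hrec, polyInner_add_left hG,
    polyInner_C_mul_left, polyInner_sum_left hG]
  simp only [polyInner_C_mul_left]
  rw [sum_mul_polyInner_eq_of_degree hG hdeg horth hGqdeg hk,
    polyInner_eq_coeff_div_of_degree_le hG hdeg horth (hGqdeg _).le]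
  ring

theorem norm_sum_range_mul_polyInner_le {c₂ : ℝ} (hc₂ : 0 ≤ c₂)
    (hii : ∀ l m : ℕ, l < m → ‖polyInner G (p l) (Gq m)‖ ≤ c₂ / m) (h2k : 2 * k ≤ n) :
    ‖∑ j ∈ Finset.range k, bs j * polyInner G (Gq (n - j)) (p (n - k))‖ ≤
      2 * c₂ * (∑ j ∈ Finset.range k, ‖bs j‖) / n := by
  rw [mul_comm (2 * c₂), mul_div_assoc, Finset.sum_mul]
  refine (norm_sum_le _ _).trans (Finset.sum_le_sum fun j hj => ?_)
  have hjk := Finset.mem_range.mp hj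
  rw [norm_mul, norm_polyInner_comm]
  gcongr
  have hn : (0 : ℝ) < n / 2 := by
    have : 0 < n := by omega
    positivity
  have hnj : (n : ℝ) / 2 ≤ ((n - j : ℕ) : ℝ) := by
    rw [Nat.cast_sub (by omega), div_le_iff₀ two_pos]
    have : (2 * j : ℝ) ≤ n := by exact_mod_cast (by omega : 2 * j ≤ n)
    linarith
  calc ‖polyInner G (p (n - k)) (Gq (n - j))‖ ≤ c₂ / ((n - j : ℕ) : ℝ) := hii _ _ (by omega)
    _ ≤ c₂ / (n / 2) := div_le_div_of_nonneg_left hc₂ hn hnj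
    _ = 2 * c₂ / n := by ring

theorem norm_recurrence_error_le {γ c₂ c₃ : ℝ} {q : ℂ[X]} (hγ : 0 < γ) (hc₂ : 0 ≤ c₂)
    (hii : ∀ l m : ℕ, l < m → ‖polyInner G (p l) (Gq m)‖ ≤ c₂ / m)
    (hq : ‖polyInner G (X * q) (p (n - k))‖ ≤ c₃ / n) (hkn : k < n) (h2k : 2 * k ≤ n) :
    ‖(γ : ℂ)⁻¹ * polyInner G (Gq (n + 1)) (p (n - k)) +
        ∑ j ∈ Finset.range k, bs j * polyInner G (Gq (n - j)) (p (n - k)) -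
        polyInner G (X * q) (p (n - k))‖ ≤
      (c₂ / γ + 2 * c₂ * (∑ j ∈ Finset.range k, ‖bs j‖) + c₃) / n := by
  have hn : (0 : ℝ) < n := by exact_mod_cast (by omega : 0 < n)
  have hnext : ‖(γ : ℂ)⁻¹ * polyInner G (Gq (n + 1)) (p (n - k))‖ ≤ c₂ / γ / n := by
    rw [norm_mul, norm_inv, Complex.norm_real, Real.norm_of_nonneg hγ.le, norm_polyInner_comm]
    calc γ⁻¹ * ‖polyInner G (p (n - k)) (Gq (n + 1))‖ ≤ γ⁻¹ * (c₂ / n) := by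
          gcongr
          refine (hii _ _ (by omega)).trans (div_le_div_of_nonneg_left hc₂ hn ?_)
          exact_mod_cast n.le_succ
      _ = c₂ / γ / n := by ring
  calc _ ≤ ‖(γ : ℂ)⁻¹ * polyInner G (Gq (n + 1)) (p (n - k))‖ +
        ‖∑ j ∈ Finset.range k, bs j * polyInner G (Gq (n - j)) (p (n - k))‖ +
        ‖polyInner G (X * q) (p (n - k))‖ :=
        (norm_sub_le _ _).trans (by gcongr; exact norm_add_le _ _)
    _ ≤ c₂ / γ / n + 2 * c₂ * (∑ j ∈ Finset.range k, ‖bs j‖) / n + c₃ / n := by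
        gcongr
        exact norm_sum_range_mul_polyInner_le hc₂ hii h2k
    _ = _ := by ring

end Recurrence

theorem abs_sub_one_le_abs_sq_sub_one {t : ℝ} (ht : 0 ≤ t) : |t - 1| ≤ |t ^ 2 - 1| := by
  rw [show t ^ 2 - 1 = (t - 1) * (t + 1) by ring, abs_mul, abs_of_nonneg (by linarith : 0 ≤ t + 1)]
  exact le_mul_of_one_le_right (abs_nonneg _) (by linarith)

theorem abs_one_sub_div_one_sub_sub_one_le {x y β : ℝ} (hx₀ : 0 ≤ x) (hxβ : x ≤ β) (hy₀ : 0 ≤ y)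
    (hyβ : y ≤ β) (hβ : β ≤ 1 / 2) : |(1 - y) / (1 - x) - 1| ≤ 2 * β := by
  have hx : 1 / 2 ≤ 1 - x := by linarith
  rw [div_sub_one (by linarith), abs_div, abs_of_pos (by linarith : 0 < 1 - x),
    div_le_iff₀ (by linarith)]
  rw [abs_le]; constructor <;> nlinarith

noncomputable def bergmanAlpha (γ : ℝ) (lam : ℕ → ℝ) (n : ℕ) : ℝ :=
  1 - ((n : ℝ) + 1) * γ ^ (2 * (n + 1)) / (Real.pi * (lam n) ^ 2)

section Alpha

variable {γ : ℝ} {lam : ℕ → ℝ} {c₁ : ℝ} {n l : ℕ}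

theorem gamma_pow_div_lam_sq (hlam : ∀ n, 0 < lam n) (n : ℕ) :
    (γ ^ (n + 1) / lam n) ^ 2 = Real.pi * (1 - bergmanAlpha γ lam n) / (n + 1) := by
  have := hlam n
  unfold bergmanAlpha
  field_simp
  ring

theorem abs_sqrt_div_gamma_pow_div_lam_le (hγ : 0 < γ) (hlam : ∀ n, 0 < lam n)
    (hα : bergmanAlpha γ lam n ≤ c₁ / n) (hn : 4 * c₁ ≤ n) (hln : l ≤ n) (h2n : 2 ≤ n) :
    |√((l + 1) / (n + 1)) / (γ ^ (n + 1) / lam n)| ≤ √n := by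
  have hu : 0 < γ ^ (n + 1) / lam n := div_pos (pow_pos hγ _) (hlam n)
  have hlnR : (l : ℝ) ≤ n := by exact_mod_cast hln
  have hnR : (2 : ℝ) ≤ n := by exact_mod_cast h2n
  have hα' : bergmanAlpha γ lam n ≤ 1 / 2 :=
    hα.trans (by rw [div_le_iff₀ (by linarith)]; linarith)
  rw [abs_of_nonneg (by positivity), ← Real.sqrt_sq hu.le, ← Real.sqrt_div' _ (sq_nonneg _),
    gamma_pow_div_lam_sq hlam]
  apply Real.sqrt_le_sqrt
  have hπ := Real.pi_gt_three
  have hπα : 3 / 2 ≤ Real.pi * (1 - bergmanAlpha γ lam n) := by nlinarith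
  rw [div_div_div_cancel_right₀ (by positivity), div_le_iff₀ (by linarith)]
  nlinarith

theorem abs_sqrt_mul_ratio_sub_one_le (hγ : 0 < γ) (hlam : ∀ n, 0 < lam n) (hc₁ : 0 ≤ c₁)
    (hi : ∀ n : ℕ, 1 ≤ n → 0 ≤ bergmanAlpha γ lam n ∧ bergmanAlpha γ lam n ≤ c₁ / n)
    (hl : 1 ≤ l) (hln : l ≤ n) (hnl : n ≤ 2 * l) (hn : 4 * c₁ ≤ n) :
    |√((l + 1) / (n + 1)) * (γ ^ (l + 1) / lam l) / (γ ^ (n + 1) / lam n) - 1| ≤ 4 * c₁ / n := by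
  have hlR : (1 : ℝ) ≤ l := by exact_mod_cast hl
  have hlnR : (l : ℝ) ≤ n := by exact_mod_cast hln
  have hnlR : (n : ℝ) ≤ 2 * l := by exact_mod_cast hnl
  have hnR : (0 : ℝ) < n := by linarith
  obtain ⟨hαn₀, hαn⟩ := hi n (by omega)
  obtain ⟨hαl₀, hαl⟩ := hi l hl
  have hαn' : bergmanAlpha γ lam n ≤ 2 * c₁ / n :=
    hαn.trans (div_le_div_of_nonneg_right (by linarith) hnR.le)
  have hαl' : bergmanAlpha γ lam l ≤ 2 * c₁ / n := by
    refine hαl.trans ?_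
    rw [div_le_div_iff₀ (by linarith) hnR]
    nlinarith
  have hβ : 2 * c₁ / n ≤ 1 / 2 := by rw [div_le_iff₀ hnR]; linarith
  have := hlam n
  have := hlam l
  have hsq : (√((l + 1) / (n + 1)) * (γ ^ (l + 1) / lam l) / (γ ^ (n + 1) / lam n)) ^ 2 =
      (1 - bergmanAlpha γ lam l) / (1 - bergmanAlpha γ lam n) := by
    have := pow_pos hγ (n + 1)
    have h1 : 1 - bergmanAlpha γ lam n ≠ 0 := by linarith
    rw [div_pow, mul_pow, Real.sq_sqrt (by positivity), gamma_pow_div_lam_sq hlam,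
      gamma_pow_div_lam_sq hlam]
    field_simp
  calc _ ≤ |(1 - bergmanAlpha γ lam l) / (1 - bergmanAlpha γ lam n) - 1| := by
        rw [← hsq]
        exact abs_sub_one_le_abs_sq_sub_one (by positivity)
    _ ≤ 2 * (2 * c₁ / n) := abs_one_sub_div_one_sub_sub_one_le hαn₀ hαn' hαl₀ hαl' hβ
    _ = 4 * c₁ / n := by ring

end Alpha

theorem norm_mul_inv_mul_add_sub_le (s u v : ℝ) (b E : ℂ) (hu : u ≠ 0) :
    ‖(s : ℂ) * ((u : ℂ)⁻¹ * (b * v + E)) - b‖ ≤ ‖b‖ * |s * v / u - 1| + |s / u| * ‖E‖ := by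
  have hsplit : (s : ℂ) * ((u : ℂ)⁻¹ * (b * v + E)) - b =
      b * ((s * v / u - 1 : ℝ) : ℂ) + ((s / u : ℝ) : ℂ) * E := by
    have : (u : ℂ) ≠ 0 := by exact_mod_cast hu
    push_cast
    field_simp
    ring
  rw [hsplit]
  refine (norm_add_le _ _).trans_eq ?_
  rw [norm_mul, norm_mul, Complex.norm_real, Complex.norm_real, Real.norm_eq_abs, Real.norm_eq_abs]

theorem mul_div_add_sqrt_mul_div_le {x a b D : ℝ} (hx : 1 ≤ x) (hab : 0 ≤ b * a) :
    b * (a / x) + √x * (D / x) ≤ (b * a + D) / √x := by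
  have : 0 < √x := Real.sqrt_pos.mpr (by linarith)
  rw [add_div, mul_div_left_comm √x, Real.sqrt_div_self, ← div_eq_mul_inv, ← mul_div_assoc]
  gcongr
  exact Real.sqrt_le_self_iff.mpr (Or.inr hx)

theorem exists_forall_le_div_sqrt_of_forall_ge {f : ℕ → ℝ} {C : ℝ} (N : ℕ)
    (h : ∀ n, N ≤ n → f n ≤ C / √n) : ∃ C', ∀ n, 1 ≤ n → f n ≤ C' / √n := by
  refine ⟨max C (∑ m ∈ Finset.range N, |f m| * √m), fun n hn => ?_⟩
  have hsn : 0 < √n := Real.sqrt_pos.mpr (by exact_mod_cast hn)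
  rcases le_or_gt N n with hNn | hnN
  · exact (h n hNn).trans (div_le_div_of_nonneg_right (le_max_left _ _) hsn.le)
  · rw [le_div_iff₀ hsn]
    calc f n * √n ≤ |f n| * √n := by gcongr; exact le_abs_self _
      _ ≤ ∑ m ∈ Finset.range N, |f m| * √m :=
          Finset.single_le_sum (f := fun m => |f m| * √m) (fun m _ => by positivity)
            (Finset.mem_range.mpr hnN)
      _ ≤ _ := le_max_right _ _

theorem diagonal_asymptotics_pw_analytic_general
    (G : Set ℂ) (hGb : Bornology.IsBounded G)
    (p : ℕ → Polynomial ℂ) (lam : ℕ → ℝ)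
    (hlam : ∀ n, 0 < lam n)
    (hdeg : ∀ n, (p n).degree = n)
    (hcoeff : ∀ n, (p n).coeff n = (lam n : ℂ))
    (horth : ∀ m n, (∫ z in G, (p m).eval z * (starRingEnd ℂ) ((p n).eval z)) =
      if m = n then 1 else 0)
    (γ : ℝ) (hγ : 0 < γ) (bs : ℕ → ℂ)
    (Gq : ℕ → Polynomial ℂ)
    (hGqrec : ∀ n, Polynomial.X * Gq n =
      Polynomial.C ((γ : ℂ))⁻¹ * Gq (n + 1) +
        ∑ j ∈ Finset.range (n + 1), Polynomial.C (bs j) * Gq (n - j))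
    (hGqdeg : ∀ n, (Gq n).degree = n)
    (hGqlead : ∀ n, (Gq n).coeff n = (γ : ℂ) ^ (n + 1))
    (k : ℕ)
    (c₁ c₂ c₃ : ℝ) (hc₁ : 0 ≤ c₁) (hc₂ : 0 ≤ c₂)
    -- (i)
    (hi : ∀ n : ℕ, 1 ≤ n →
      0 ≤ 1 - ((n : ℝ) + 1) * γ ^ (2 * (n + 1)) / (Real.pi * (lam n) ^ 2) ∧
      1 - ((n : ℝ) + 1) * γ ^ (2 * (n + 1)) / (Real.pi * (lam n) ^ 2) ≤ c₁ / n)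
    -- (ii)
    (hii : ∀ l m : ℕ, l < m →
      ‖(∫ z in G, (p l).eval z * (starRingEnd ℂ) ((Gq m).eval z))‖ ≤ c₂ / m)
    -- (iii)
    (hiii : ∀ n : ℕ, k + 1 ≤ n →
      ‖(∫ z in G,
          z * ((Gq n - Polynomial.C ((γ : ℂ) ^ (n + 1) / (lam n : ℂ)) * p n).eval z) *
            (starRingEnd ℂ) ((p (n - k)).eval z))‖ ≤ c₃ / n) :
    ∃ C : ℝ, ∀ n : ℕ, k + 1 ≤ n →
      ‖((Real.sqrt (((n : ℝ) - k + 1) / ((n : ℝ) + 1)) : ℂ) *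
          (∫ z in G, z * (p n).eval z * (starRingEnd ℂ) ((p (n - k)).eval z)) - bs k)‖
        ≤ C / Real.sqrt n := by
  have horth' : ∀ m n, polyInner G (p m) (p n) = if m = n then 1 else 0 := horth
  have hcast : ∀ m, (γ : ℂ) ^ (m + 1) / (lam m : ℂ) = ((γ ^ (m + 1) / lam m : ℝ) : ℂ) := by
    intro m; push_cast; rfl
  refine (exists_forall_le_div_sqrt_of_forall_ge (2 * k + 2 + ⌈4 * c₁⌉₊)
    (C := ‖bs k‖ * (4 * c₁) + (c₂ / γ + 2 * c₂ * (∑ j ∈ Finset.range k, ‖bs j‖) + c₃))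
    fun n hn => ?_).imp fun C hC n hn => hC n (by omega)
  have h4c₁ : 4 * c₁ ≤ n := (Nat.le_ceil _).trans (by exact_mod_cast (by omega : ⌈4 * c₁⌉₊ ≤ n))
  have hu : γ ^ (n + 1) / lam n ≠ 0 := (div_pos (pow_pos hγ _) (hlam n)).ne'
  have hexpand := polyInner_X_mul_eq_of_recurrence (n := n) (k := k) hGb hdeg horth' hGqdeg
    (u := ((γ ^ (n + 1) / lam n : ℝ) : ℂ)) (by exact_mod_cast hu) (hGqrec n) (by omega)
  rw [hGqlead, hcoeff, hcast] at hexpand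
  have hq := hiii n (by omega)
  rw [← polyInner_X_mul_left, hcast] at hq
  rw [← polyInner_X_mul_left, hexpand, ← Nat.cast_sub (by omega)]
  calc _ ≤ _ := norm_mul_inv_mul_add_sub_le _ _ _ _ _ hu
    _ ≤ ‖bs k‖ * (4 * c₁ / n) +
        √n * ((c₂ / γ + 2 * c₂ * (∑ j ∈ Finset.range k, ‖bs j‖) + c₃) / n) := by
        gcongr
        · exact abs_sqrt_mul_ratio_sub_one_le hγ hlam hc₁ hi (by omega) (by omega) (by omega) h4c₁
        · exact abs_sqrt_div_gamma_pow_div_lam_le hγ hlam (hi n (by omega)).2 h4c₁ (by omega)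
            (by omega)
        · exact norm_recurrence_error_le hγ hc₂ hii hq (by omega) (by omega)
    _ ≤ _ := mul_div_add_sqrt_mul_div_le (by exact_mod_cast (by omega : 1 ≤ n)) (by positivity)

/-- Theorem 2.1, estimate (3.2), conditional form: under the stated
hypotheses (i)–(iv) there is a constant `C` such that for all `n ≥ k+1`,
`|√((n−k+1)/(n+1))·⟨z·p_n, p_{n−k}⟩ − b_k| ≤ C/√n`. -/
theorem diagonal_asymptotics_pw_analytic
    (G : Set ℂ) (hG : G.Nonempty) (hGo : IsOpen G) (hGb : Bornology.IsBounded G)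
    (p : ℕ → Polynomial ℂ) (lam : ℕ → ℝ)
    (hlam : ∀ n, 0 < lam n)
    (hdeg : ∀ n, (p n).degree = n)
    (hcoeff : ∀ n, (p n).coeff n = (lam n : ℂ))
    (horth : ∀ m n, (∫ z in G, (p m).eval z * (starRingEnd ℂ) ((p n).eval z)) =
      if m = n then 1 else 0)
    (γ : ℝ) (hγ : 0 < γ) (bs : ℕ → ℂ)
    (Gq : ℕ → Polynomial ℂ)
    (hGq0 : Gq 0 = Polynomial.C (γ : ℂ))
    (hGqrec : ∀ n, Polynomial.X * Gq n =
      Polynomial.C ((γ : ℂ))⁻¹ * Gq (n + 1) +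
        ∑ j ∈ Finset.range (n + 1), Polynomial.C (bs j) * Gq (n - j))
    (hGqdeg : ∀ n, (Gq n).degree = n)
    (hGqlead : ∀ n, (Gq n).coeff n = (γ : ℂ) ^ (n + 1))
    (k : ℕ)
    (c₁ c₂ c₃ c₄ ω : ℝ) (hc₁ : 0 ≤ c₁) (hc₂ : 0 ≤ c₂) (hc₃ : 0 ≤ c₃) (hc₄ : 0 ≤ c₄)
    (hω₀ : 0 < ω) (hω₂ : ω < 2)
    -- (i)
    (hi : ∀ n : ℕ, 1 ≤ n →
      0 ≤ 1 - ((n : ℝ) + 1) * γ ^ (2 * (n + 1)) / (Real.pi * (lam n) ^ 2) ∧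
      1 - ((n : ℝ) + 1) * γ ^ (2 * (n + 1)) / (Real.pi * (lam n) ^ 2) ≤ c₁ / n)
    -- (ii)
    (hii : ∀ l m : ℕ, l < m →
      ‖(∫ z in G, (p l).eval z * (starRingEnd ℂ) ((Gq m).eval z))‖ ≤ c₂ / m)
    -- (iii)
    (hiii : ∀ n : ℕ, k + 1 ≤ n →
      ‖(∫ z in G,
          z * ((Gq n - Polynomial.C ((γ : ℂ) ^ (n + 1) / (lam n : ℂ)) * p n).eval z) *
            (starRingEnd ℂ) ((p (n - k)).eval z))‖ ≤ c₃ / n)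
    -- (iv)
    (hiv : ∀ j : ℕ, 1 ≤ j → ‖(bs j)‖ ≤ c₄ / (j : ℝ) ^ ((1 : ℝ) + ω)) :
    ∃ C : ℝ, ∀ n : ℕ, k + 1 ≤ n →
      ‖((Real.sqrt (((n : ℝ) - k + 1) / ((n : ℝ) + 1)) : ℂ) *
          (∫ z in G, z * (p n).eval z * (starRingEnd ℂ) ((p (n - k)).eval z)) - bs k)‖
        ≤ C / Real.sqrt n :=
  diagonal_asymptotics_pw_analytic_general G hGb p lam hlam hdeg hcoeff horth γ hγ bs Gq hGqrec
    hGqdeg hGqlead k c₁ c₂ c₃ hc₁ hc₂ hi hii hiii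
end

section
/- (Theorem 2.2, estimate (3.4), conditional form.) Fix an integer k ≥ 0 and a real number σ > 1/2. Assume there exist constants c_1, c_2, c_3, c_4 ≥ 0 such that: (i) for all n ≥ 1, |√((n+1)/π)·γ^{n+1}/λ_n − 1| ≤ c_1/n^{2σ}; (ii) |⟨p_l, G_m⟩| ≤ c_2/m^{σ+1/2} whenever m > l ≥ 0; (iii) for all n ≥ k+1, |⟨z·q_{n−1}, p_{n−k}⟩| ≤ c_3/n^{σ+1/2}, where q_{n−1} := G_n − (γ^{n+1}/λ_n)·p_n; (iv) |b_j| ≤ c_4/j^{σ+1/2} for all j ≥ 1. Then there exists a constant C (depending only on k, σ and c_1,…,c_4) such that for all n ≥ k+1, |√((n−k+1)/(n+1))·⟨z·p_n, p_{n−k}⟩ − b_k| ≤ C/n^σ. -/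
/-!
Write `a_n = γ^{n+1}/λ_n`, which is `⟨G_n, p_n⟩`, and `q_{n-1} = G_n - a_n p_n`. Pairing the
recurrence for `z G_n` with `p_{n-k}`, orthogonality kills the terms with `j > k`, leaving
`a_n ⟨z p_n, p_{n-k}⟩ = b_k a_{n-k} + E_n` with
`E_n = b ⟨G_{n+1}, p_{n-k}⟩ + ∑_{j<k} b_j ⟨G_{n-j}, p_{n-k}⟩ - ⟨z q_{n-1}, p_{n-k}⟩`,
which is `O(n^{-σ-1/2})` by (ii) and (iii). With `s_n = √((n-k+1)/(n+1))` and
`u_n = √((n+1)/π) a_n` this reads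
`s_n ⟨z p_n, p_{n-k}⟩ - b_k = b_k (u_{n-k}/u_n - 1) + s_n E_n / a_n`.
By (i), `u_n = 1 + O(n^{-2σ})`, so the first term is `O(n^{-2σ})` and `1/a_n = O(√n)`, which
makes the second `O(n^{-σ})`.
-/

open MeasureTheory Polynomial Filter Asymptotics ComplexConjugate

noncomputable def areaInner (G : Set ℂ) (P Q : ℂ[X]) : ℂ :=
  ∫ z in G, P.eval z * conj (Q.eval z)

section AreaInner

variable {G : Set ℂ}

theorem integrableOn_eval_mul_conj_eval_s7 (hG : Bornology.IsBounded G) (P Q : ℂ[X]) :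
    IntegrableOn (fun z => P.eval z * conj (Q.eval z)) G :=
  ((by fun_prop : Continuous fun z => P.eval z * conj (Q.eval z)).continuousOn
    |>.integrableOn_compact hG.isCompact_closure).mono_set subset_closure

theorem areaInner_add_left (hG : Bornology.IsBounded G) (P P' Q : ℂ[X]) :
    areaInner G (P + P') Q = areaInner G P Q + areaInner G P' Q := by
  simp only [areaInner, eval_add, add_mul]
  exact integral_add (integrableOn_eval_mul_conj_eval_s7 hG P Q)
    (integrableOn_eval_mul_conj_eval_s7 hG P' Q)

theorem areaInner_C_mul_left (a : ℂ) (P Q : ℂ[X]) :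
    areaInner G (C a * P) Q = a * areaInner G P Q := by
  simp only [areaInner, eval_mul, eval_C, mul_assoc, integral_const_mul]

theorem areaInner_sum_left (hG : Bornology.IsBounded G) {ι : Type*} (s : Finset ι)
    (P : ι → ℂ[X]) (Q : ℂ[X]) :
    areaInner G (∑ i ∈ s, P i) Q = ∑ i ∈ s, areaInner G (P i) Q :=
  map_sum (AddMonoidHom.mk' (fun P => areaInner G P Q) fun P P' => areaInner_add_left hG P P' Q)
    P s

theorem norm_areaInner_comm (P Q : ℂ[X]) : ‖areaInner G P Q‖ = ‖areaInner G Q P‖ := by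
  rw [← Complex.norm_conj, areaInner, ← integral_conj]
  simp only [areaInner, map_mul, Complex.conj_conj, mul_comm]

end AreaInner

theorem degree_sub_C_mul_lt_s7 {K : Type*} [Field K] {P R : K[X]} {m : ℕ} (hP : P.degree ≤ m)
    (hR : R.degree = m) : (P - C (P.coeff m / R.coeff m) * R).degree < m := by
  have hRm : R.coeff m ≠ 0 := coeff_ne_zero_of_eq_degree hR
  rw [degree_lt_iff_coeff_zero]
  intro j hj
  rcases hj.eq_or_lt with rfl | hj
  · simp [hRm]
  · have hRj : R.coeff j = 0 := coeff_eq_zero_of_degree_lt (hR ▸ WithBot.coe_lt_coe.2 hj)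
    simp [coeff_eq_zero_of_degree_lt (hP.trans_lt (WithBot.coe_lt_coe.2 hj)), hRj]

section Orthonormal

variable {G : Set ℂ} {p : ℕ → ℂ[X]}

theorem areaInner_eq_zero_of_degree_lt (hG : Bornology.IsBounded G)
    (hdeg : ∀ n, (p n).degree = n)
    (horth : ∀ m n, areaInner G (p m) (p n) = if m = n then 1 else 0)
    {Q : ℂ[X]} {n : ℕ} (hQ : Q.degree < n) : areaInner G Q (p n) = 0 := by
  suffices ∀ d ≤ n, ∀ Q : ℂ[X], Q.degree < d → areaInner G Q (p n) = 0 from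
    this n le_rfl Q hQ
  intro d
  induction d with
  | zero =>
    intro _ Q hQ
    rw [Nat.cast_zero, Nat.WithBot.lt_zero_iff, degree_eq_bot] at hQ
    simp [hQ, areaInner]
  | succ d ih =>
    intro hd Q hQ
    have hR := degree_sub_C_mul_lt_s7 (Order.le_of_lt_succ hQ) (hdeg d)
    rw [← sub_add_cancel Q (C _ * p d), areaInner_add_left hG, areaInner_C_mul_left,
      ih (by omega) _ hR, horth, if_neg (by omega), mul_zero, add_zero]

theorem areaInner_eq_coeff_div_coeff (hG : Bornology.IsBounded G)
    (hdeg : ∀ n, (p n).degree = n)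
    (horth : ∀ m n, areaInner G (p m) (p n) = if m = n then 1 else 0)
    {Q : ℂ[X]} {n : ℕ} (hQ : Q.degree ≤ n) :
    areaInner G Q (p n) = Q.coeff n / (p n).coeff n := by
  have hlow := areaInner_eq_zero_of_degree_lt hG hdeg horth (degree_sub_C_mul_lt_s7 hQ (hdeg n))
  have h := areaInner_add_left hG (Q - C (Q.coeff n / (p n).coeff n) * p n)
    (C (Q.coeff n / (p n).coeff n) * p n) (p n)
  rwa [sub_add_cancel, areaInner_C_mul_left, horth, if_pos rfl, mul_one, hlow, zero_add] at h

theorem areaInner_mul_areaInner_X_mul_eq (hG : Bornology.IsBounded G)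
    (hdeg : ∀ n, (p n).degree = n)
    (horth : ∀ m n, areaInner G (p m) (p n) = if m = n then 1 else 0)
    {F : ℕ → ℂ[X]} {β : ℂ} {b : ℕ → ℂ}
    (hrec : ∀ n, X * F n = C β * F (n + 1) + ∑ j ∈ Finset.range (n + 1), C (b j) * F (n - j))
    (hFdeg : ∀ n, (F n).degree = n) {k n : ℕ} (hkn : k ≤ n) :
    areaInner G (F n) (p n) * areaInner G (X * p n) (p (n - k)) =
      b k * areaInner G (F (n - k)) (p (n - k)) +
        (β * areaInner G (F (n + 1)) (p (n - k)) +
          ∑ j ∈ Finset.range k, b j * areaInner G (F (n - j)) (p (n - k)) -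
          areaInner G (X * (F n - C (areaInner G (F n) (p n)) * p n)) (p (n - k))) := by
  set c := areaInner G (F n) (p n)
  have hsplit : X * F n = C c * (X * p n) + X * (F n - C c * p n) := by ring
  have hhigh : ∀ j ∈ Finset.Ico (k + 1) (n + 1),
      b j * areaInner G (F (n - j)) (p (n - k)) = 0 := by
    intro j hj
    rw [Finset.mem_Ico] at hj
    have hdeg_lt : (F (n - j)).degree < ↑(n - k) := by
      rw [hFdeg]
      exact_mod_cast (by omega : n - j < n - k)
    rw [areaInner_eq_zero_of_degree_lt hG hdeg horth hdeg_lt, mul_zero]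
  have hsum : ∑ j ∈ Finset.range (n + 1), b j * areaInner G (F (n - j)) (p (n - k)) =
      ∑ j ∈ Finset.range k, b j * areaInner G (F (n - j)) (p (n - k)) +
        b k * areaInner G (F (n - k)) (p (n - k)) := by
    rw [← Finset.sum_range_add_sum_Ico _ (by omega : k + 1 ≤ n + 1), Finset.sum_eq_zero hhigh,
      add_zero, Finset.sum_range_succ]
  have h := congrArg (areaInner G · (p (n - k))) (hrec n)
  simp only [hsplit, areaInner_add_left hG, areaInner_C_mul_left, areaInner_sum_left hG,
    hsum] at h
  linear_combination h

end Orthonormal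

theorem isBigO_natCast_add_rpow (c r : ℝ) :
    (fun n : ℕ => ((n : ℝ) + c) ^ r) =O[atTop] fun n => (n : ℝ) ^ r :=
  ((IsEquivalent.refl.add_const_of_norm_tendsto_atTop
    (tendsto_norm_atTop_atTop.comp tendsto_natCast_atTop_atTop)).rpow
    (fun n => n.cast_nonneg)).isBigO

theorem isBigO_natSub_rpow (j : ℕ) (r : ℝ) :
    (fun n : ℕ => ((n - j : ℕ) : ℝ) ^ r) =O[atTop] fun n => (n : ℝ) ^ r := by
  refine (isBigO_natCast_add_rpow (-j) r).congr' ?_ EventuallyEq.rfl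
  filter_upwards [eventually_ge_atTop j] with n hn
  rw [Nat.cast_sub hn, sub_eq_add_neg]

theorem isBigO_natCast_rpow_of_le {r s : ℝ} (h : r ≤ s) :
    (fun n : ℕ => (n : ℝ) ^ r) =O[atTop] fun n => (n : ℝ) ^ s := by
  refine IsBigO.of_bound 1 ?_
  filter_upwards [eventually_ge_atTop 1] with n hn
  have hn : (1 : ℝ) ≤ n := by exact_mod_cast hn
  rw [one_mul, Real.norm_of_nonneg (by positivity), Real.norm_of_nonneg (by positivity)]
  exact Real.rpow_le_rpow_of_exponent_le hn h

theorem isBigO_rpow_neg_of_norm_le_div {α E : Type*} [Norm E] {l : Filter α} {f : α → E}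
    {x : α → ℝ} {c e : ℝ} (hx : ∀ᶠ a in l, 0 ≤ x a) (h : ∀ᶠ a in l, ‖f a‖ ≤ c / x a ^ e) :
    f =O[l] fun a => x a ^ (-e) := by
  refine IsBigO.of_bound c ?_
  filter_upwards [hx, h] with a hxa ha
  rwa [Real.norm_of_nonneg (by positivity), Real.rpow_neg hxa, ← div_eq_mul_inv]

theorem exists_norm_le_div_rpow_of_isBigO {E : Type*} [Norm E] {f : ℕ → E} {σ : ℝ}
    (h : f =O[atTop] fun n => (n : ℝ) ^ (-σ)) :
    ∃ C, ∀ n, 1 ≤ n → ‖f n‖ ≤ C / (n : ℝ) ^ σ := by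
  obtain ⟨C, -, hC⟩ := bound_of_isBigO_nat_atTop h
  refine ⟨C, fun n hn => ?_⟩
  have hn : (0 : ℝ) < n := by exact_mod_cast hn
  have := hC (by positivity : (n : ℝ) ^ (-σ) ≠ 0)
  rwa [Real.norm_of_nonneg (by positivity), Real.rpow_neg hn.le, ← div_eq_mul_inv] at this

theorem tendsto_of_sub_isBigO_rpow_neg {u : ℕ → ℝ} {L r : ℝ} (hr : 0 < r)
    (hu : (fun n => u n - L) =O[atTop] fun n => (n : ℝ) ^ (-r)) :
    Tendsto u atTop (nhds L) := by
  have := (hu.trans_tendsto ((tendsto_rpow_neg_atTop hr).comp tendsto_natCast_atTop_atTop))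
  simpa using this.add_const L

theorem isBigO_comp_natSub_div_sub_one {u : ℕ → ℝ} {r : ℝ} (hr : 0 < r)
    (hu : (fun n => u n - 1) =O[atTop] fun n => (n : ℝ) ^ (-r)) (k : ℕ) :
    (fun n => u (n - k) / u n - 1) =O[atTop] fun n => (n : ℝ) ^ (-r) := by
  have hlim := tendsto_of_sub_isBigO_rpow_neg hr hu
  have hinv : (fun n => (u n)⁻¹) =O[atTop] fun _ => (1 : ℝ) :=
    (hlim.inv₀ one_ne_zero).isBigO_one ℝ
  have hshift : (fun n => u (n - k) - 1) =O[atTop] fun n => (n : ℝ) ^ (-r) :=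
    (hu.comp_tendsto (tendsto_sub_atTop_nat k)).trans (isBigO_natSub_rpow k (-r))
  refine ((hshift.sub hu).mul hinv).congr' ?_ (by simp)
  filter_upwards [hlim.eventually_ne one_ne_zero] with n hn
  field_simp
  ring

theorem isBigO_inv_of_tendsto_sqrt_mul {a : ℕ → ℝ} {ρ : ℝ}
    (ha : Tendsto (fun n : ℕ => √(((n : ℝ) + 1) / ρ) * a n) atTop (nhds 1)) :
    (fun n => (a n)⁻¹) =O[atTop] fun n => (n : ℝ) ^ (1 / 2 : ℝ) := by
  have hsqrt : (fun n : ℕ => √(((n : ℝ) + 1) / ρ)) =O[atTop]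
      fun n => (n : ℝ) ^ (1 / 2 : ℝ) := by
    refine IsBigO.trans (IsBigO.of_bound (√ρ)⁻¹ (Eventually.of_forall fun n => ?_))
      (isBigO_natCast_add_rpow 1 (1 / 2))
    rw [← Real.sqrt_eq_rpow, Real.norm_of_nonneg (Real.sqrt_nonneg _),
      Real.norm_of_nonneg (Real.sqrt_nonneg _), Real.sqrt_div (by positivity), inv_mul_eq_div]
  refine (hsqrt.mul ((ha.inv₀ one_ne_zero).isBigO_one ℝ)).congr' ?_ (by simp)
  filter_upwards [ha.eventually_ne one_ne_zero] with n hn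
  rw [mul_inv, ← mul_assoc, mul_inv_cancel₀ (left_ne_zero_of_mul hn), one_mul]

theorem isBigO_sqrt_mul_sub_of_mul_eq {a : ℕ → ℝ} {I E : ℕ → ℂ} {b : ℂ} {k : ℕ} {ρ σ : ℝ}
    (hρ : 0 < ρ) (hσ : 0 < σ) (hI : ∀ n, k ≤ n → (a n : ℂ) * I n = b * a (n - k) + E n)
    (hu : (fun n : ℕ => √(((n : ℝ) + 1) / ρ) * a n - 1) =O[atTop]
      fun n => (n : ℝ) ^ (-(2 * σ)))
    (hE : E =O[atTop] fun n => (n : ℝ) ^ (-(σ + 1 / 2))) :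
    (fun n : ℕ => (√(((n : ℝ) - k + 1) / ((n : ℝ) + 1)) : ℂ) * I n - b) =O[atTop]
      fun n => (n : ℝ) ^ (-σ) := by
  set s := fun n : ℕ => √(((n : ℝ) - k + 1) / ((n : ℝ) + 1))
  set u := fun n : ℕ => √(((n : ℝ) + 1) / ρ) * a n
  have hlim := tendsto_of_sub_isBigO_rpow_neg (by positivity) hu
  have hs : s =O[atTop] fun _ => (1 : ℝ) := by
    refine IsBigO.of_bound 1 (Eventually.of_forall fun n => ?_)
    rw [one_mul, norm_one, Real.norm_of_nonneg (Real.sqrt_nonneg _), Real.sqrt_le_one]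
    exact div_le_one_of_le₀ (by linarith [(k.cast_nonneg : (0 : ℝ) ≤ k)]) (by positivity)
  have hratio : (fun n => (b * ((u (n - k) / u n - 1 : ℝ) : ℂ))) =O[atTop]
      fun n => (n : ℝ) ^ (-σ) :=
    ((Complex.isBigO_ofReal_left.mpr (isBigO_comp_natSub_div_sub_one (by positivity) hu k))
      |>.const_mul_left b).trans (isBigO_natCast_rpow_of_le (by linarith))
  have herror : (fun n => ((s n * (a n)⁻¹ : ℝ) : ℂ) * E n) =O[atTop]
      fun n => (n : ℝ) ^ (-σ) := by
    refine ((Complex.isBigO_ofReal_left.mpr (hs.mul (isBigO_inv_of_tendsto_sqrt_mul hlim))).mul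
      hE).congr' EventuallyEq.rfl ?_
    filter_upwards [eventually_gt_atTop 0] with n hn
    rw [one_mul, ← Real.rpow_add (by exact_mod_cast hn)]
    ring_nf
  refine (hratio.add herror).congr' ?_ EventuallyEq.rfl
  filter_upwards [eventually_ge_atTop k, hlim.eventually_ne one_ne_zero] with n hkn hn
  have hratio_eq : s n * a (n - k) / a n = u (n - k) / u n := by
    simp only [s, u, Nat.cast_sub hkn]
    rw [Real.sqrt_div' _ (by positivity : (0 : ℝ) ≤ (n : ℝ) + 1),
      Real.sqrt_div' _ hρ.le, Real.sqrt_div' _ hρ.le]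
    field_simp
  have ha : (a n : ℂ) ≠ 0 := Complex.ofReal_ne_zero.mpr (right_ne_zero_of_mul hn)
  simp only [← hratio_eq]
  push_cast
  field_simp
  linear_combination -(s n : ℂ) * hI n hkn

theorem isBigO_recurrence_remainder {G : Set ℂ} {p F : ℕ → ℂ[X]} {β : ℂ} {b : ℕ → ℂ}
    {T : ℕ → ℂ} {k : ℕ} {c c' e : ℝ}
    (hF : ∀ l m : ℕ, l < m → ‖areaInner G (p l) (F m)‖ ≤ c / (m : ℝ) ^ e)
    (hT : ∀ n : ℕ, k + 1 ≤ n → ‖T n‖ ≤ c' / (n : ℝ) ^ e) :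
    (fun n => β * areaInner G (F (n + 1)) (p (n - k)) +
        ∑ j ∈ Finset.range k, b j * areaInner G (F (n - j)) (p (n - k)) - T n) =O[atTop]
      fun n => (n : ℝ) ^ (-e) := by
  have hnext : (fun n => areaInner G (F (n + 1)) (p (n - k))) =O[atTop]
      fun n => (n : ℝ) ^ (-e) := by
    refine (isBigO_rpow_neg_of_norm_le_div (x := fun n : ℕ => (n : ℝ) + 1) (c := c)
      (Eventually.of_forall fun n => by positivity) (Eventually.of_forall fun n => ?_)).trans
      (isBigO_natCast_add_rpow 1 (-e))
    rw [norm_areaInner_comm]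
    exact_mod_cast hF (n - k) (n + 1) (by omega)
  have hprev : ∀ j ∈ Finset.range k,
      (fun n => b j * areaInner G (F (n - j)) (p (n - k))) =O[atTop] fun n => (n : ℝ) ^ (-e) := by
    intro j hj
    refine ((isBigO_rpow_neg_of_norm_le_div (x := fun n : ℕ => ((n - j : ℕ) : ℝ)) (c := c)
      (Eventually.of_forall fun n => by positivity) ?_).trans
      (isBigO_natSub_rpow j (-e))).const_mul_left (b j)
    filter_upwards [eventually_ge_atTop k] with n hn
    rw [norm_areaInner_comm]
    exact hF (n - k) (n - j) (by rw [Finset.mem_range] at hj; omega)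
  have hrem : T =O[atTop] fun n => (n : ℝ) ^ (-e) :=
    isBigO_rpow_neg_of_norm_le_div (Eventually.of_forall fun n => by positivity)
      (eventually_ge_atTop (k + 1) |>.mono hT)
  exact ((hnext.const_mul_left β).add (IsBigO.fun_sum hprev)).sub hrem

theorem diagonal_asymptotics_smooth_general
    (G : Set ℂ) (hGb : Bornology.IsBounded G)
    (p : ℕ → Polynomial ℂ) (lam : ℕ → ℝ)
    (hdeg : ∀ n, (p n).degree = n)
    (hcoeff : ∀ n, (p n).coeff n = (lam n : ℂ))
    (horth : ∀ m n, (∫ z in G, (p m).eval z * (starRingEnd ℂ) ((p n).eval z)) =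
      if m = n then 1 else 0)
    (γ : ℝ) (bs : ℕ → ℂ)
    (Gq : ℕ → Polynomial ℂ)
    (hGqrec : ∀ n, Polynomial.X * Gq n =
      Polynomial.C ((γ : ℂ))⁻¹ * Gq (n + 1) +
        ∑ j ∈ Finset.range (n + 1), Polynomial.C (bs j) * Gq (n - j))
    (hGqdeg : ∀ n, (Gq n).degree = n)
    (hGqlead : ∀ n, (Gq n).coeff n = (γ : ℂ) ^ (n + 1))
    (k : ℕ)
    (σ : ℝ) (hσ : 1 / 2 < σ)
    (c₁ c₂ c₃ : ℝ)
    -- (i)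
    (hi : ∀ n : ℕ, 1 ≤ n →
      |Real.sqrt (((n : ℝ) + 1) / Real.pi) * γ ^ (n + 1) / lam n - 1| ≤ c₁ / (n : ℝ) ^ (2 * σ))
    -- (ii)
    (hii : ∀ l m : ℕ, l < m →
      ‖∫ z in G, (p l).eval z * (starRingEnd ℂ) ((Gq m).eval z)‖ ≤ c₂ / (m : ℝ) ^ (σ + 1 / 2))
    -- (iii)
    (hiii : ∀ n : ℕ, k + 1 ≤ n →
      ‖∫ z in G,
          z * ((Gq n - Polynomial.C ((γ : ℂ) ^ (n + 1) / (lam n : ℂ)) * p n).eval z) *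
            (starRingEnd ℂ) ((p (n - k)).eval z)‖ ≤ c₃ / (n : ℝ) ^ (σ + 1 / 2)) :
    ∃ C : ℝ, ∀ n : ℕ, k + 1 ≤ n →
      ‖(Real.sqrt (((n : ℝ) - k + 1) / ((n : ℝ) + 1)) : ℂ) *
          (∫ z in G, z * (p n).eval z * (starRingEnd ℂ) ((p (n - k)).eval z)) - bs k‖
        ≤ C / (n : ℝ) ^ σ := by
  have hcoef : ∀ m, areaInner G (Gq m) (p m) = (γ : ℂ) ^ (m + 1) / (lam m : ℂ) := fun m => by
    rw [areaInner_eq_coeff_div_coeff hGb hdeg horth (hGqdeg m).le, hGqlead, hcoeff]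
  have hkey : ∀ n, k ≤ n →
      ((γ ^ (n + 1) / lam n : ℝ) : ℂ) * areaInner G (X * p n) (p (n - k)) =
        bs k * ((γ ^ (n - k + 1) / lam (n - k) : ℝ) : ℂ) +
          ((γ : ℂ)⁻¹ * areaInner G (Gq (n + 1)) (p (n - k)) +
            ∑ j ∈ Finset.range k, bs j * areaInner G (Gq (n - j)) (p (n - k)) -
            areaInner G (X * (Gq n - C ((γ : ℂ) ^ (n + 1) / (lam n : ℂ)) * p n))
              (p (n - k))) := by
    intro n hkn
    push_cast
    simpa only [hcoef] using areaInner_mul_areaInner_X_mul_eq hGb hdeg horth hGqrec hGqdeg hkn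
  have hu : (fun n : ℕ => √(((n : ℝ) + 1) / Real.pi) * (γ ^ (n + 1) / lam n) - 1) =O[atTop]
      fun n => (n : ℝ) ^ (-(2 * σ)) :=
    isBigO_rpow_neg_of_norm_le_div (Eventually.of_forall fun n => by positivity)
      ((eventually_ge_atTop 1).mono fun n hn => by
        simpa only [mul_div_assoc, Real.norm_eq_abs] using hi n hn)
  have hE := isBigO_recurrence_remainder (β := (γ : ℂ)⁻¹) (b := bs)
    (T := fun n => areaInner G (X * (Gq n - C ((γ : ℂ) ^ (n + 1) / (lam n : ℂ)) * p n))
      (p (n - k))) hii (fun n hn => by simpa only [areaInner, eval_mul, eval_X] using hiii n hn)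
  obtain ⟨C, hC⟩ := exists_norm_le_div_rpow_of_isBigO
    (isBigO_sqrt_mul_sub_of_mul_eq Real.pi_pos (by linarith) hkey hu hE)
  exact ⟨C, fun n hn => by simpa only [areaInner, eval_mul, eval_X] using hC n (by omega)⟩

/-- Theorem 2.2, estimate (3.4), conditional form: under the stated
hypotheses (i)–(iv), with `σ > 1/2`, there is a constant `C` such that for all `n ≥ k+1`,
`|√((n−k+1)/(n+1))·⟨z·p_n, p_{n−k}⟩ − b_k| ≤ C/n^σ`. -/
theorem diagonal_asymptotics_smooth
    (G : Set ℂ) (hG : G.Nonempty) (hGo : IsOpen G) (hGb : Bornology.IsBounded G)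
    (p : ℕ → Polynomial ℂ) (lam : ℕ → ℝ)
    (hlam : ∀ n, 0 < lam n)
    (hdeg : ∀ n, (p n).degree = n)
    (hcoeff : ∀ n, (p n).coeff n = (lam n : ℂ))
    (horth : ∀ m n, (∫ z in G, (p m).eval z * (starRingEnd ℂ) ((p n).eval z)) =
      if m = n then 1 else 0)
    (γ : ℝ) (hγ : 0 < γ) (bs : ℕ → ℂ)
    (Gq : ℕ → Polynomial ℂ)
    (hGq0 : Gq 0 = Polynomial.C (γ : ℂ))
    (hGqrec : ∀ n, Polynomial.X * Gq n =
      Polynomial.C ((γ : ℂ))⁻¹ * Gq (n + 1) +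
        ∑ j ∈ Finset.range (n + 1), Polynomial.C (bs j) * Gq (n - j))
    (hGqdeg : ∀ n, (Gq n).degree = n)
    (hGqlead : ∀ n, (Gq n).coeff n = (γ : ℂ) ^ (n + 1))
    (k : ℕ)
    (σ : ℝ) (hσ : 1 / 2 < σ)
    (c₁ c₂ c₃ c₄ : ℝ) (hc₁ : 0 ≤ c₁) (hc₂ : 0 ≤ c₂) (hc₃ : 0 ≤ c₃) (hc₄ : 0 ≤ c₄)
    -- (i)
    (hi : ∀ n : ℕ, 1 ≤ n →
      |Real.sqrt (((n : ℝ) + 1) / Real.pi) * γ ^ (n + 1) / lam n - 1| ≤ c₁ / (n : ℝ) ^ (2 * σ))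
    -- (ii)
    (hii : ∀ l m : ℕ, l < m →
      ‖∫ z in G, (p l).eval z * (starRingEnd ℂ) ((Gq m).eval z)‖ ≤ c₂ / (m : ℝ) ^ (σ + 1 / 2))
    -- (iii)
    (hiii : ∀ n : ℕ, k + 1 ≤ n →
      ‖∫ z in G,
          z * ((Gq n - Polynomial.C ((γ : ℂ) ^ (n + 1) / (lam n : ℂ)) * p n).eval z) *
            (starRingEnd ℂ) ((p (n - k)).eval z)‖ ≤ c₃ / (n : ℝ) ^ (σ + 1 / 2))
    -- (iv)
    (hiv : ∀ j : ℕ, 1 ≤ j → ‖bs j‖ ≤ c₄ / (j : ℝ) ^ (σ + 1 / 2)) :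
    ∃ C : ℝ, ∀ n : ℕ, k + 1 ≤ n →
      ‖(Real.sqrt (((n : ℝ) - k + 1) / ((n : ℝ) + 1)) : ℂ) *
          (∫ z in G, z * (p n).eval z * (starRingEnd ℂ) ((p (n - k)).eval z)) - bs k‖
        ≤ C / (n : ℝ) ^ σ :=
  diagonal_asymptotics_smooth_general G hGb p lam hdeg hcoeff horth γ bs Gq hGqrec hGqdeg hGqlead k
    σ hσ c₁ c₂ c₃ hi hii hiii
end

section
/- (Claim (6.27) in the proof of Theorem 2.3.) Let 0 < ϱ < 1. There exists a constant c, depending only on ϱ, with the following property: for every integer j ≥ 1, all complex numbers A_1, …, A_j and a_1, a_2, a_3, … satisfying ∑_{ν=1}^{j} ν·|A_ν|² + ∑_{ν=1}^{∞} ν·|a_ν|²·ϱ^{−2ν} ≤ ϱ^{2j+2}/((j+1)·(1−ϱ^{2j})), and every w ∈ ℂ with |w| = 1, one has |∑_{ν=1}^{j} A_ν·w^ν + ∑_{ν=1}^{∞} a_ν·w^{−ν}| ≤ c·√(log(j+1)/(j+1))·ϱ^j. -/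
/-!
Put `S = ∑ ν |A_ν|² + ∑ ν |a_ν|² ϱ^{-2ν}`. By Cauchy–Schwarz against the weights `1/ν`, the
polynomial part is at most `√S · √(1 + log j)`; each `|a_ν|` is at most `√S · ϱ^ν`, so the
Laurent tail is at most `√S · ϱ/(1-ϱ)`. Since `j ≥ 1`, the hypothesis gives
`√S ≤ ϱ^{j+1} / √((j+1)(1-ϱ²))`, and both `√(1 + log j)` and the constant are `O(√(log (j+1)))`.
-/

open Finset Real

lemma sum_Icc_inv_le_one_add_log (n : ℕ) : ∑ i ∈ Icc 1 n, (i : ℝ)⁻¹ ≤ 1 + log n := by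
  simpa only [harmonic_eq_sum_Icc, Rat.cast_sum, Rat.cast_inv, Rat.cast_natCast]
    using harmonic_le_one_add_log n

lemma sum_Icc_norm_le_sqrt_mul_sqrt_one_add_log {E : Type*} [SeminormedAddCommGroup E]
    (f : ℕ → E) (n : ℕ) :
    ∑ i ∈ Icc 1 n, ‖f i‖ ≤ √(∑ i ∈ Icc 1 n, (i : ℝ) * ‖f i‖ ^ 2) * √(1 + log n) := by
  have hCS : (∑ i ∈ Icc 1 n, ‖f i‖) ^ 2 ≤
      (∑ i ∈ Icc 1 n, (i : ℝ) * ‖f i‖ ^ 2) * ∑ i ∈ Icc 1 n, (i : ℝ)⁻¹ := by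
    refine sum_sq_le_sum_mul_sum_of_sq_le_mul _ (fun i _ => by positivity)
      (fun i _ => by positivity) fun i hi => le_of_eq ?_
    have : (i : ℝ) ≠ 0 := by exact_mod_cast (Nat.one_le_iff_ne_zero.mp (mem_Icc.mp hi).1)
    field_simp
  rw [← sqrt_mul (sum_nonneg fun i _ => by positivity)]
  refine le_sqrt_of_sq_le (hCS.trans ?_)
  gcongr
  exact sum_Icc_inv_le_one_add_log n

lemma norm_le_sqrt_mul_pow_of_sq_div_pow_le {E : Type*} [SeminormedAddCommGroup E]
    {x : E} {r S : ℝ} (hr : 0 < r) (m : ℕ) (h : ‖x‖ ^ 2 / r ^ (2 * m) ≤ S) :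
    ‖x‖ ≤ √S * r ^ m := by
  rw [div_le_iff₀ (by positivity), pow_mul'] at h
  calc ‖x‖ ≤ √(S * (r ^ m) ^ 2) := le_sqrt_of_sq_le h
    _ = √S * r ^ m := by rw [sqrt_mul' _ (by positivity), sqrt_sq (by positivity)]

lemma norm_tsum_mul_zpow_neg_le {ϱ : ℝ} (hϱ₀ : 0 < ϱ) (hϱ₁ : ϱ < 1) (a : ℕ → ℂ)
    (hsum : Summable fun ν : ℕ => ((ν : ℝ) + 1) * ‖a (ν + 1)‖ ^ 2 / ϱ ^ (2 * (ν + 1)))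
    {w : ℂ} (hw : ‖w‖ = 1) :
    ‖∑' ν : ℕ, a (ν + 1) * w ^ (-((ν : ℤ) + 1))‖ ≤
      √(∑' ν : ℕ, ((ν : ℝ) + 1) * ‖a (ν + 1)‖ ^ 2 / ϱ ^ (2 * (ν + 1))) * (ϱ / (1 - ϱ)) := by
  set T := ∑' ν : ℕ, ((ν : ℝ) + 1) * ‖a (ν + 1)‖ ^ 2 / ϱ ^ (2 * (ν + 1))
  have hcoeff (ν : ℕ) : ‖a (ν + 1)‖ ≤ √T * ϱ ^ (ν + 1) := by
    refine norm_le_sqrt_mul_pow_of_sq_div_pow_le hϱ₀ _ ?_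
    calc ‖a (ν + 1)‖ ^ 2 / ϱ ^ (2 * (ν + 1))
        ≤ ((ν : ℝ) + 1) * ‖a (ν + 1)‖ ^ 2 / ϱ ^ (2 * (ν + 1)) := by
          gcongr
          exact le_mul_of_one_le_left (by positivity) (by simp)
      _ ≤ T := hsum.le_tsum ν fun i _ => by positivity
  have hgeom : HasSum (fun ν : ℕ => √T * ϱ ^ (ν + 1)) (√T * (ϱ / (1 - ϱ))) := by
    simpa only [pow_succ', ← mul_assoc, div_eq_mul_inv] using
      (hasSum_geometric_of_lt_one hϱ₀.le hϱ₁).mul_left (√T * ϱ)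
  refine tsum_of_norm_bounded hgeom fun ν => ?_
  rw [norm_mul, norm_zpow, hw, one_zpow, mul_one]
  exact hcoeff ν

lemma norm_sum_Icc_mul_pow_le {A : ℕ → ℂ} {w : ℂ} (hw : ‖w‖ = 1) (n : ℕ) :
    ‖∑ ν ∈ Icc 1 n, A ν * w ^ ν‖ ≤ √(∑ ν ∈ Icc 1 n, (ν : ℝ) * ‖A ν‖ ^ 2) * √(1 + log n) :=
  calc ‖∑ ν ∈ Icc 1 n, A ν * w ^ ν‖ ≤ ∑ ν ∈ Icc 1 n, ‖A ν‖ := by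
        simpa only [norm_mul, norm_pow, hw, one_pow, mul_one] using
          norm_sum_le (Icc 1 n) fun ν => A ν * w ^ ν
    _ ≤ _ := sum_Icc_norm_le_sqrt_mul_sqrt_one_add_log A n

lemma sqrt_pow_div_mul_one_sub_pow_le {ϱ : ℝ} (hϱ₀ : 0 < ϱ) (hϱ₁ : ϱ < 1) {j : ℕ} (hj : 1 ≤ j) :
    √(ϱ ^ (2 * j + 2) / (((j : ℝ) + 1) * (1 - ϱ ^ (2 * j)))) ≤
      ϱ / √(1 - ϱ ^ 2) * ϱ ^ j / √((j : ℝ) + 1) := by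
  have hpow : ϱ ^ (2 * j) ≤ ϱ ^ 2 := pow_le_pow_of_le_one hϱ₀.le hϱ₁.le (by omega)
  have hϱ2 : ϱ ^ 2 < 1 := pow_lt_one₀ hϱ₀.le hϱ₁ two_ne_zero
  calc √(ϱ ^ (2 * j + 2) / (((j : ℝ) + 1) * (1 - ϱ ^ (2 * j))))
      ≤ √(ϱ ^ (2 * j + 2) / (((j : ℝ) + 1) * (1 - ϱ ^ 2))) := by gcongr
    _ = ϱ / √(1 - ϱ ^ 2) * ϱ ^ j / √((j : ℝ) + 1) := by
        rw [show ϱ ^ (2 * j + 2) = (ϱ * ϱ ^ j) ^ 2 by ring, sqrt_div' _ (by nlinarith),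
          sqrt_sq (by positivity), sqrt_mul (by positivity)]
        ring

lemma sqrt_one_add_log_add_le {j : ℕ} (hj : 1 ≤ j) {K : ℝ} (hK : 0 ≤ K) :
    √(1 + log j) + K ≤ (1 + K) * √(1 + (log 2)⁻¹) * √(log ((j : ℝ) + 1)) := by
  have hj2 : (2 : ℝ) ≤ j + 1 := by norm_cast; omega
  have hlog2 : 0 < log 2 := log_pos one_lt_two
  have hL : log 2 ≤ log ((j : ℝ) + 1) := log_le_log two_pos hj2
  have hratio : 1 ≤ (log 2)⁻¹ * log ((j : ℝ) + 1) := by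
    rw [inv_mul_eq_div, one_le_div hlog2]; exact hL
  have hlog : 1 + log j ≤ (1 + (log 2)⁻¹) * log ((j : ℝ) + 1) := by
    have : log j ≤ log ((j : ℝ) + 1) := log_le_log (by positivity) (by linarith)
    linarith
  have hone : 1 ≤ (1 + (log 2)⁻¹) * log ((j : ℝ) + 1) := by linarith
  rw [mul_assoc, ← sqrt_mul (by positivity), add_mul, one_mul]
  have hsqrt : 1 ≤ √((1 + (log 2)⁻¹) * log ((j : ℝ) + 1)) := one_le_sqrt.mpr hone
  gcongr
  nlinarith

/-- claim (6.27): there is a constant `c = c(ϱ)` such that for every `j ≥ 1`,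
all coefficients `A_ν`, `a_ν` satisfying the weighted-square bound, and every `w` with
`|w| = 1`, one has
`|∑_{ν=1}^{j} A_ν w^ν + ∑_{ν=1}^{∞} a_ν w^{−ν}| ≤ c·√(log(j+1)/(j+1))·ϱ^j`. -/
theorem claim_6_27 (ϱ : ℝ) (hϱ₀ : 0 < ϱ) (hϱ₁ : ϱ < 1) :
    ∃ c : ℝ, ∀ (j : ℕ), 1 ≤ j → ∀ (A a : ℕ → ℂ),
      Summable (fun ν : ℕ => ((ν : ℝ) + 1) * ‖a (ν + 1)‖ ^ 2 / ϱ ^ (2 * (ν + 1))) →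
      (∑ ν ∈ Finset.Icc 1 j, (ν : ℝ) * ‖A ν‖ ^ 2) +
          (∑' ν : ℕ, ((ν : ℝ) + 1) * ‖a (ν + 1)‖ ^ 2 / ϱ ^ (2 * (ν + 1)))
        ≤ ϱ ^ (2 * j + 2) / (((j : ℝ) + 1) * (1 - ϱ ^ (2 * j))) →
      ∀ w : ℂ, ‖w‖ = 1 →
        ‖(∑ ν ∈ Finset.Icc 1 j, A ν * w ^ ν) +
            ∑' ν : ℕ, a (ν + 1) * w ^ (-((ν : ℤ) + 1))‖
          ≤ c * Real.sqrt (Real.log ((j : ℝ) + 1) / ((j : ℝ) + 1)) * ϱ ^ j := by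
  have hK : 0 ≤ ϱ / (1 - ϱ) := div_nonneg hϱ₀.le (by linarith)
  refine ⟨ϱ / √(1 - ϱ ^ 2) * ((1 + ϱ / (1 - ϱ)) * √(1 + (log 2)⁻¹)),
    fun j hj A a hsum hS w hw => ?_⟩
  set F := ∑ ν ∈ Icc 1 j, (ν : ℝ) * ‖A ν‖ ^ 2
  set T := ∑' ν : ℕ, ((ν : ℝ) + 1) * ‖a (ν + 1)‖ ^ 2 / ϱ ^ (2 * (ν + 1))
  have hF : 0 ≤ F := sum_nonneg fun ν _ => by positivity
  have hT : 0 ≤ T := tsum_nonneg fun ν => by positivity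
  have hFT : √(F + T) ≤ ϱ / √(1 - ϱ ^ 2) * ϱ ^ j / √((j : ℝ) + 1) :=
    (sqrt_le_sqrt hS).trans (sqrt_pow_div_mul_one_sub_pow_le hϱ₀ hϱ₁ hj)
  calc _ ≤ √F * √(1 + log j) + √T * (ϱ / (1 - ϱ)) :=
        (norm_add_le _ _).trans <| add_le_add (norm_sum_Icc_mul_pow_le hw j)
          (norm_tsum_mul_zpow_neg_le hϱ₀ hϱ₁ a hsum hw)
    _ ≤ √(F + T) * (√(1 + log j) + ϱ / (1 - ϱ)) := by
        rw [mul_add]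
        gcongr <;> linarith
    _ ≤ ϱ / √(1 - ϱ ^ 2) * ϱ ^ j / √((j : ℝ) + 1) *
          ((1 + ϱ / (1 - ϱ)) * √(1 + (log 2)⁻¹) * √(log ((j : ℝ) + 1))) := by
        gcongr
        exact sqrt_one_add_log_add_le hj hK
    _ = _ := by
        rw [sqrt_div' _ (by positivity)]
        ring
end

section
/- (Core lemma in the proof of Theorem 2.4.) Let (α_n)_{n≥1} be a sequence of real numbers with 0 ≤ α_n < 1 for all n and α_n → 0 as n → ∞. Define ξ_n := √((1−α_{n+1})/(1−α_n)) − 1. If limsup_{n→∞} |ξ_n|^{1/n} < 1, then limsup_{n→∞} α_n^{1/n} < 1. -/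
/-!
Write `β n = 1 - α n`, so that `β (n + 1) = β n (1 + ξ n)²` and hence
`|β (n + 1) - β n| ≤ 3 |ξ n|` once `|ξ n| ≤ 1`. The root-test hypothesis makes `|ξ n| ≤ rⁿ`
eventually for some `r < 1`, and since `β n → 1`, summing the geometric tail gives
`α n = 1 - β n ≤ 3 rⁿ / (1 - r)`, which forces `limsup α_n^{1/n} ≤ r < 1`.
-/

open Filter Topology

theorem eventually_dist_le_geometric_of_tendsto {α : Type*} [PseudoMetricSpace α] {f : ℕ → α}
    {a : α} {r C : ℝ} (hr : r < 1) (hu : ∀ᶠ n in atTop, dist (f n) (f (n + 1)) ≤ C * r ^ n)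
    (ha : Tendsto f atTop (𝓝 a)) : ∀ᶠ n in atTop, dist (f n) a ≤ C / (1 - r) * r ^ n := by
  obtain ⟨N, hN⟩ := eventually_atTop.mp hu
  have hshift : ∀ k, dist (f (k + N)) (f (k + 1 + N)) ≤ C * r ^ N * r ^ k := fun k => by
    rw [mul_assoc, ← pow_add, add_comm N, add_right_comm]
    exact hN _ (Nat.le_add_left N k)
  have hlim : Tendsto (fun k => f (k + N)) atTop (𝓝 a) := (tendsto_add_atTop_iff_nat N).mpr ha
  filter_upwards [eventually_ge_atTop N] with n hn
  obtain ⟨k, rfl⟩ := Nat.exists_eq_add_of_le' hn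
  calc dist (f (k + N)) a ≤ C * r ^ N * r ^ k / (1 - r) :=
        dist_le_of_le_geometric_of_tendsto _ _ hr hshift hlim k
    _ = C / (1 - r) * r ^ (k + N) := by rw [pow_add]; ring

theorem isBoundedUnder_abs_rpow_inv_of_tendsto_zero {x : ℕ → ℝ}
    (hx : Tendsto x atTop (𝓝 0)) :
    IsBoundedUnder (· ≤ ·) atTop (fun n : ℕ => |x n| ^ (n : ℝ)⁻¹) := by
  refine ⟨1, eventually_map.2 ?_⟩
  filter_upwards [hx.abs.eventually (ge_mem_nhds (by simp : |(0 : ℝ)| < 1))] with n hn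
  exact Real.rpow_le_one (abs_nonneg _) hn (by positivity)

theorem eventually_abs_le_pow_of_limsup_rpow_inv_lt {x : ℕ → ℝ} {r : ℝ}
    (hbdd : IsBoundedUnder (· ≤ ·) atTop (fun n : ℕ => |x n| ^ (n : ℝ)⁻¹))
    (h : limsup (fun n : ℕ => |x n| ^ (n : ℝ)⁻¹) atTop < r) :
    ∀ᶠ n in atTop, |x n| ≤ r ^ n := by
  filter_upwards [eventually_lt_of_limsup_lt h hbdd, eventually_ge_atTop 1] with n hn hn1
  calc |x n| = (|x n| ^ (n : ℝ)⁻¹) ^ n :=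
        (Real.rpow_inv_natCast_pow (abs_nonneg _) (by omega)).symm
    _ ≤ r ^ n := pow_le_pow_left₀ (Real.rpow_nonneg (abs_nonneg _) _) hn.le n

theorem limsup_rpow_inv_lt_one_of_le_geometric {x : ℕ → ℝ} {C r : ℝ} (hr0 : 0 ≤ r) (hr : r < 1)
    (hx0 : ∀ᶠ n in atTop, 0 ≤ x n) (hx : ∀ᶠ n in atTop, x n ≤ C * r ^ n) :
    limsup (fun n : ℕ => x n ^ (n : ℝ)⁻¹) atTop < 1 := by
  obtain ⟨s, hrs, hs1⟩ := exists_between hr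
  have hCs : ∀ᶠ n in atTop, ‖C * r ^ n‖ ≤ 1 * ‖s ^ n‖ :=
    ((isLittleO_pow_pow_of_lt_left hr0 hrs).const_mul_left C).bound one_pos
  have hroot : ∀ᶠ n in atTop, x n ^ (n : ℝ)⁻¹ ≤ s := by
    filter_upwards [hx0, hx, hCs, eventually_ge_atTop 1] with n hn0 hn hnC hn1
    have hxs : x n ≤ s ^ n := by
      rw [one_mul, Real.norm_of_nonneg (pow_nonneg (hr0.trans hrs.le) n)] at hnC
      exact hn.trans ((le_abs_self _).trans hnC)
    calc x n ^ (n : ℝ)⁻¹ ≤ (s ^ n) ^ (n : ℝ)⁻¹ := by gcongr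
      _ = s := Real.pow_rpow_inv_natCast (hr0.trans hrs.le) (by omega)
  have hcob : IsCoboundedUnder (· ≤ ·) atTop (fun n : ℕ => x n ^ (n : ℝ)⁻¹) :=
    isCoboundedUnder_le_of_eventually_le atTop
      (hx0.mono fun n hn => Real.rpow_nonneg hn _)
  exact (limsup_le_of_le hcob hroot).trans_lt hs1

theorem abs_sub_le_three_mul_abs_sqrt_div_sub_one {a b : ℝ} (ha : 0 < a) (ha1 : a ≤ 1)
    (hb : 0 ≤ b) (h : |√(b / a) - 1| ≤ 1) : |b - a| ≤ 3 * |√(b / a) - 1| := by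
  set s := √(b / a)
  have hs0 : 0 ≤ s := Real.sqrt_nonneg _
  have hs2 : s ≤ 2 := by linarith [(abs_le.mp h).2]
  have hb_eq : b - a = a * (s + 1) * (s - 1) := by
    have : s ^ 2 = b / a := Real.sq_sqrt (div_nonneg hb ha.le)
    field_simp at this
    linear_combination -this
  rw [hb_eq, abs_mul, abs_of_nonneg (by positivity : 0 ≤ a * (s + 1))]
  gcongr
  nlinarith

theorem tendsto_sqrt_succ_div_sub_one {β : ℕ → ℝ} (hβ : Tendsto β atTop (𝓝 1)) :
    Tendsto (fun n => √(β (n + 1) / β n) - 1) atTop (𝓝 0) := by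
  simpa using ((hβ.comp (tendsto_add_atTop_nat 1)).div hβ one_ne_zero).sqrt.sub_const 1

/-- core lemma in the proof of Theorem 2.4: if `0 ≤ α_n < 1`, `α_n → 0`,
and `ξ_n := √((1−α_{n+1})/(1−α_n)) − 1` satisfies `limsup |ξ_n|^{1/n} < 1`, then
`limsup α_n^{1/n} < 1`. -/
theorem limsup_alpha_root_lt_one
    (α : ℕ → ℝ)
    (hα : ∀ n : ℕ, 1 ≤ n → 0 ≤ α n ∧ α n < 1)
    (hα0 : Filter.Tendsto α Filter.atTop (nhds 0))
    (ξ : ℕ → ℝ)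
    (hξ : ∀ n : ℕ, 1 ≤ n → ξ n = Real.sqrt ((1 - α (n + 1)) / (1 - α n)) - 1)
    (h : Filter.limsup (fun n : ℕ => |ξ n| ^ ((n : ℝ)⁻¹)) Filter.atTop < 1) :
    Filter.limsup (fun n : ℕ => (α n) ^ ((n : ℝ)⁻¹)) Filter.atTop < 1 := by
  have hβ : Tendsto (fun n => 1 - α n) atTop (𝓝 1) := by
    simpa using tendsto_const_nhds.sub hα0
  have hξ0 : Tendsto ξ atTop (𝓝 0) := by
    refine (tendsto_sqrt_succ_div_sub_one hβ).congr' ?_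
    filter_upwards [eventually_ge_atTop 1] with n hn
    exact (hξ n hn).symm
  obtain ⟨r, hLr, hr1⟩ := exists_between (max_lt h zero_lt_one)
  have hr0 : 0 ≤ r := (le_max_right _ _).trans hLr.le
  have hξr : ∀ᶠ n in atTop, |ξ n| ≤ r ^ n :=
    eventually_abs_le_pow_of_limsup_rpow_inv_lt
      (isBoundedUnder_abs_rpow_inv_of_tendsto_zero hξ0) ((le_max_left _ _).trans_lt hLr)
  have hstep : ∀ᶠ n in atTop, dist (1 - α n) (1 - α (n + 1)) ≤ 3 * r ^ n := by
    filter_upwards [hξr, eventually_ge_atTop 1] with n hnr hn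
    obtain ⟨hαn0, hαn1⟩ := hα n hn
    have hξ1 : |ξ n| ≤ 1 := hnr.trans (pow_le_one₀ hr0 hr1.le)
    rw [hξ n hn] at hnr hξ1
    rw [dist_comm, Real.dist_eq]
    exact (abs_sub_le_three_mul_abs_sqrt_div_sub_one (by linarith) (by linarith)
      (by linarith [(hα (n + 1) (by omega)).2]) hξ1).trans (by gcongr)
  have hαr : ∀ᶠ n in atTop, α n ≤ 3 / (1 - r) * r ^ n := by
    filter_upwards [eventually_dist_le_geometric_of_tendsto hr1 hstep hβ] with n hn
    rw [Real.dist_eq, sub_sub_cancel_left, abs_neg] at hn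
    exact (le_abs_self _).trans hn
  exact limsup_rpow_inv_lt_one_of_le_geometric hr0 hr1
    ((eventually_ge_atTop 1).mono fun n hn => (hα n hn).1) hαr
end

section
/- (Theorem 4.1, conditional form.) Let 0 < ϱ < 1 and c_1, c_2, c_3 ≥ 0. Suppose b, b_0, b_1, b_2, … are complex numbers with |b_k| ≤ c_1·ϱ^k/√k for all k ≥ 1, and set Ψ(w) := b·w + b_0 + ∑_{k=1}^{∞} b_k·w^{−k} (the series converges for |w| ≥ 1). Then there exist constants C_1, C_2, depending only on ϱ, c_1, c_2, c_3, such that: for every integer m ≥ 2, setting n := 2m, for all complex numbers β, β_0, …, β_m satisfying |β − b| ≤ c_2·ϱ^{4m} and |β_k − b_k| ≤ c_3·√(n·log n)·ϱ^n for 0 ≤ k ≤ m, setting Ψ_m^{(n)}(w) := β·w + β_0 + ∑_{k=1}^{m} β_k·w^{−k}, one has for every w ∈ ℂ with |w| ≥ 1: |Ψ(w) − Ψ_m^{(n)}(w)| ≤ C_1·√(m·log m)·ϱ^m + C_2·|w|·ϱ^{4m}. -/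
/-!
Write `Ψ − Ψ_m^{(n)}` as `(b − β)·w`, plus the polynomial `∑_{k ≤ m} (b_k − β_k)·w^{-k}` in `w⁻¹`,
plus the tail `∑_{k > m} b_k·w^{-k}` of the series. For `|w| ≥ 1` every `w^{-k}` has modulus at
most `1`, so the polynomial is bounded by `(m + 1)·c₃√(n log n)·ϱ^{2m}`; as
`√(2m log 2m) ≤ 2√(m log m)` and `(m + 1)·ϱ^m ≤ 1/(1 − ϱ)`, this is at most
`2c₃√(m log m)·ϱ^m/(1 − ϱ)`. The tail is dominated by the geometric series `c₁ ∑_{k > m} ϱ^k`,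
and `√(m log m) ≥ 1` once `m ≥ 2`.
-/

open Finset

section LaurentSums

variable {𝕜 : Type*} [NormedDivisionRing 𝕜] {w : 𝕜}

theorem norm_mul_zpow_neg_natCast_le (hw : 1 ≤ ‖w‖) (a : 𝕜) (k : ℕ) :
    ‖a * w ^ (-(k : ℤ))‖ ≤ ‖a‖ := by
  rw [norm_mul, norm_zpow]
  exact mul_le_of_le_one_right (norm_nonneg a) (zpow_le_one_of_nonpos₀ hw (by omega))

theorem norm_sum_range_mul_zpow_neg_le (hw : 1 ≤ ‖w‖) {a : ℕ → 𝕜} {m : ℕ} {D : ℝ}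
    (ha : ∀ k ≤ m, ‖a k‖ ≤ D) :
    ‖∑ k ∈ range (m + 1), a k * w ^ (-(k : ℤ))‖ ≤ (m + 1) * D :=
  calc _ ≤ ∑ k ∈ range (m + 1), ‖a k * w ^ (-(k : ℤ))‖ := norm_sum_le _ _
    _ ≤ ∑ _k ∈ range (m + 1), D := sum_le_sum fun k hk =>
        (norm_mul_zpow_neg_natCast_le hw _ k).trans (ha k (Nat.lt_succ_iff.mp (mem_range.mp hk)))
    _ = (m + 1) * D := by simp

theorem summable_mul_zpow_neg_of_norm_le_geometric [CompleteSpace 𝕜] (hw : 1 ≤ ‖w‖)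
    {a : ℕ → 𝕜} {C ϱ : ℝ} (hϱ₀ : 0 ≤ ϱ) (hϱ₁ : ϱ < 1) (ha : ∀ k, 1 ≤ k → ‖a k‖ ≤ C * ϱ ^ k) :
    Summable fun k => a k * w ^ (-(k : ℤ)) :=
  Summable.of_norm_bounded_eventually_nat ((summable_geometric_of_lt_one hϱ₀ hϱ₁).mul_left C)
    (Filter.eventually_atTop.mpr
      ⟨1, fun k hk => (norm_mul_zpow_neg_natCast_le hw _ k).trans (ha k hk)⟩)

theorem laurent_sub_truncation_eq {a α : ℕ → 𝕜} (ha : Summable fun k => a k * w ^ (-(k : ℤ)))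
    (m : ℕ) :
    (a 0 + ∑' k : ℕ, a (k + 1) * w ^ (-((k : ℤ) + 1))) -
        (α 0 + ∑ k ∈ Icc 1 m, α k * w ^ (-(k : ℤ))) =
      ∑ k ∈ range (m + 1), (a k - α k) * w ^ (-(k : ℤ)) +
        ∑' k, a (k + (m + 1)) * w ^ (-((k + (m + 1) : ℕ) : ℤ)) := by
  have hseries : a 0 + ∑' k : ℕ, a (k + 1) * w ^ (-((k : ℤ) + 1)) =
      ∑ k ∈ range (m + 1), a k * w ^ (-(k : ℤ)) +
        ∑' k, a (k + (m + 1)) * w ^ (-((k + (m + 1) : ℕ) : ℤ)) := by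
    rw [ha.sum_add_tsum_nat_add, ha.tsum_eq_zero_add]
    simp only [Nat.cast_zero, neg_zero, zpow_zero, mul_one, Nat.cast_succ]
  have htruncation : α 0 + ∑ k ∈ Icc 1 m, α k * w ^ (-(k : ℤ)) =
      ∑ k ∈ range (m + 1), α k * w ^ (-(k : ℤ)) := by
    rw [range_eq_Ico, sum_eq_sum_Ico_succ_bot m.succ_pos, zero_add, Nat.succ_eq_add_one,
      Ico_add_one_right_eq_Icc]
    simp only [Nat.cast_zero, neg_zero, zpow_zero, mul_one]
  rw [hseries, htruncation]
  simp only [sub_mul, sum_sub_distrib]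
  abel

end LaurentSums

theorem norm_tsum_nat_add_le_of_norm_le_geometric {E : Type*} [SeminormedAddCommGroup E]
    {f : ℕ → E} {C ϱ : ℝ} (hϱ₀ : 0 ≤ ϱ) (hϱ₁ : ϱ < 1) (n : ℕ)
    (hf : ∀ k, n ≤ k → ‖f k‖ ≤ C * ϱ ^ k) :
    ‖∑' k, f (k + n)‖ ≤ C * ϱ ^ n / (1 - ϱ) := by
  refine tsum_of_norm_bounded (g := fun k => C * ϱ ^ n * ϱ ^ k) ?_ fun k => ?_
  · simpa [div_eq_mul_inv] using (hasSum_geometric_of_lt_one hϱ₀ hϱ₁).mul_left (C * ϱ ^ n)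
  · rw [mul_assoc, ← pow_add, add_comm n]
    exact hf _ (Nat.le_add_left n k)

theorem add_one_mul_pow_le_inv_one_sub {ϱ : ℝ} (hϱ₀ : 0 ≤ ϱ) (hϱ₁ : ϱ < 1) (m : ℕ) :
    (m + 1) * ϱ ^ m ≤ (1 - ϱ)⁻¹ :=
  calc (m + 1 : ℝ) * ϱ ^ m = ∑ _k ∈ range (m + 1), ϱ ^ m := by simp
    _ ≤ ∑ k ∈ range (m + 1), ϱ ^ k := sum_le_sum fun k hk =>
        pow_le_pow_of_le_one hϱ₀ hϱ₁.le (Nat.lt_succ_iff.mp (mem_range.mp hk))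
    _ ≤ ∑' k, ϱ ^ k :=
        (summable_geometric_of_lt_one hϱ₀ hϱ₁).sum_le_tsum _ fun k _ => pow_nonneg hϱ₀ k
    _ = (1 - ϱ)⁻¹ := tsum_geometric_of_lt_one hϱ₀ hϱ₁

theorem one_le_sqrt_mul_log {x : ℝ} (hx : 2 ≤ x) : 1 ≤ √(x * Real.log x) := by
  have hlog2 := Real.log_two_gt_d9
  have hlog : Real.log 2 ≤ Real.log x := Real.log_le_log two_pos hx
  rw [Real.one_le_sqrt]
  nlinarith

theorem sqrt_two_mul_mul_log_two_mul_le {x : ℝ} (hx : 2 ≤ x) :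
    √(2 * x * Real.log (2 * x)) ≤ 2 * √(x * Real.log x) := by
  have hlog : Real.log 2 ≤ Real.log x := Real.log_le_log two_pos hx
  rw [show 2 * √(x * Real.log x) = √(2 ^ 2 * (x * Real.log x)) by
    rw [Real.sqrt_mul (by norm_num : (0 : ℝ) ≤ 2 ^ 2), Real.sqrt_sq zero_le_two]]
  apply Real.sqrt_le_sqrt
  rw [Real.log_mul two_ne_zero (by positivity)]
  nlinarith

theorem add_one_mul_sqrt_two_mul_log_mul_pow_le {ϱ c : ℝ} (hϱ₀ : 0 ≤ ϱ) (hϱ₁ : ϱ < 1)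
    (hc : 0 ≤ c) {m : ℕ} (hm : 2 ≤ m) :
    (m + 1) * (c * √(((2 * m : ℕ) : ℝ) * Real.log ((2 * m : ℕ) : ℝ)) * ϱ ^ (2 * m)) ≤
      2 * c / (1 - ϱ) * √(m * Real.log m) * ϱ ^ m :=
  calc _ ≤ (m + 1) * (c * (2 * √(m * Real.log m)) * ϱ ^ (2 * m)) := by
        gcongr
        push_cast
        exact sqrt_two_mul_mul_log_two_mul_le (by exact_mod_cast hm)
    _ = 2 * c * √(m * Real.log m) * ϱ ^ m * ((m + 1) * ϱ ^ m) := by ring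
    _ ≤ 2 * c * √(m * Real.log m) * ϱ ^ m * (1 - ϱ)⁻¹ := by
        gcongr
        exact add_one_mul_pow_le_inv_one_sub hϱ₀ hϱ₁ m
    _ = 2 * c / (1 - ϱ) * √(m * Real.log m) * ϱ ^ m := by ring

theorem mul_pow_succ_div_le_sqrt_mul_log_mul_pow {ϱ c : ℝ} (hϱ₀ : 0 ≤ ϱ) (hϱ₁ : ϱ < 1)
    (hc : 0 ≤ c) {m : ℕ} (hm : 2 ≤ m) :
    c * ϱ ^ (m + 1) / (1 - ϱ) ≤ c / (1 - ϱ) * √(m * Real.log m) * ϱ ^ m := by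
  have h1ϱ : 0 < 1 - ϱ := by linarith
  calc c * ϱ ^ (m + 1) / (1 - ϱ) ≤ c * (√(m * Real.log m) * ϱ ^ m) / (1 - ϱ) := by
        gcongr
        calc ϱ ^ (m + 1) ≤ ϱ ^ m := pow_le_pow_of_le_one hϱ₀ hϱ₁.le m.le_succ
          _ ≤ √(m * Real.log m) * ϱ ^ m :=
            le_mul_of_one_le_left (by positivity) (one_le_sqrt_mul_log (by exact_mod_cast hm))
    _ = c / (1 - ϱ) * √(m * Real.log m) * ϱ ^ m := by ring

theorem recovery_algorithm_estimate_general
    (ϱ : ℝ) (hϱ₀ : 0 < ϱ) (hϱ₁ : ϱ < 1)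
    (c₁ c₂ c₃ : ℝ) (hc₁ : 0 ≤ c₁) (hc₃ : 0 ≤ c₃)
    (b : ℂ) (bs : ℕ → ℂ)
    (hbs : ∀ k : ℕ, 1 ≤ k → ‖bs k‖ ≤ c₁ * ϱ ^ k / Real.sqrt k) :
    ∃ C₁ C₂ : ℝ, ∀ m : ℕ, 2 ≤ m →
      ∀ (β : ℂ) (βs : ℕ → ℂ),
        ‖β - b‖ ≤ c₂ * ϱ ^ (4 * m) →
        (∀ k : ℕ, k ≤ m →
          ‖βs k - bs k‖ ≤
            c₃ * Real.sqrt (((2 * m : ℕ) : ℝ) * Real.log ((2 * m : ℕ) : ℝ)) * ϱ ^ (2 * m)) →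
        ∀ w : ℂ, 1 ≤ ‖w‖ →
          ‖(b * w + bs 0 + ∑' k : ℕ, bs (k + 1) * w ^ (-((k : ℤ) + 1))) -
              (β * w + βs 0 + ∑ k ∈ Finset.Icc 1 m, βs k * w ^ (-(k : ℤ)))‖
            ≤ C₁ * Real.sqrt ((m : ℝ) * Real.log m) * ϱ ^ m +
                C₂ * ‖w‖ * ϱ ^ (4 * m) := by
  refine ⟨(2 * c₃ + c₁) / (1 - ϱ), c₂, fun m hm β βs hβ hβs w hw => ?_⟩
  set s := √((m : ℝ) * Real.log m)
  have hbs' : ∀ k, 1 ≤ k → ‖bs k‖ ≤ c₁ * ϱ ^ k := fun k hk =>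
    (hbs k hk).trans (div_le_self (by positivity) (Real.one_le_sqrt.mpr (by exact_mod_cast hk)))
  have hlin : ‖(b - β) * w‖ ≤ c₂ * ‖w‖ * ϱ ^ (4 * m) := by
    rw [norm_mul, norm_sub_rev, mul_right_comm]
    exact mul_le_mul_of_nonneg_right hβ (norm_nonneg w)
  have hpoly : ‖∑ k ∈ range (m + 1), (bs k - βs k) * w ^ (-(k : ℤ))‖ ≤
      2 * c₃ / (1 - ϱ) * s * ϱ ^ m :=
    (norm_sum_range_mul_zpow_neg_le hw fun k hk => norm_sub_rev (bs k) _ ▸ hβs k hk).trans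
      (add_one_mul_sqrt_two_mul_log_mul_pow_le hϱ₀.le hϱ₁ hc₃ hm)
  have htail : ‖∑' k, bs (k + (m + 1)) * w ^ (-((k + (m + 1) : ℕ) : ℤ))‖ ≤
      c₁ / (1 - ϱ) * s * ϱ ^ m :=
    (norm_tsum_nat_add_le_of_norm_le_geometric hϱ₀.le hϱ₁ (m + 1) fun k hk =>
      (norm_mul_zpow_neg_natCast_le hw (bs k) k).trans (hbs' k (by omega))).trans
      (mul_pow_succ_div_le_sqrt_mul_log_mul_pow hϱ₀.le hϱ₁ hc₁ hm)
  rw [add_assoc, add_assoc, add_sub_add_comm, ← sub_mul, laurent_sub_truncation_eq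
    (summable_mul_zpow_neg_of_norm_le_geometric hw hϱ₀.le hϱ₁ hbs') m]
  refine ((norm_add_le _ _).trans
    (add_le_add hlin ((norm_add_le _ _).trans (add_le_add hpoly htail)))).trans_eq ?_
  ring

/-- Theorem 4.1, conditional form: if `|b_k| ≤ c_1·ϱ^k/√k` for `k ≥ 1`, then
there are constants `C_1, C_2`, depending only on `ϱ, c_1, c_2, c_3`, such that for every
`m ≥ 2`, `n := 2m`, and approximations `β, β_0, …, β_m` with `|β − b| ≤ c_2·ϱ^{4m}` and
`|β_k − b_k| ≤ c_3·√(n·log n)·ϱ^n` for `0 ≤ k ≤ m`, one has for every `|w| ≥ 1`: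
`|Ψ(w) − Ψ_m^{(n)}(w)| ≤ C_1·√(m·log m)·ϱ^m + C_2·|w|·ϱ^{4m}`. -/
theorem recovery_algorithm_estimate
    (ϱ : ℝ) (hϱ₀ : 0 < ϱ) (hϱ₁ : ϱ < 1)
    (c₁ c₂ c₃ : ℝ) (hc₁ : 0 ≤ c₁) (hc₂ : 0 ≤ c₂) (hc₃ : 0 ≤ c₃)
    (b : ℂ) (bs : ℕ → ℂ)
    (hbs : ∀ k : ℕ, 1 ≤ k → ‖bs k‖ ≤ c₁ * ϱ ^ k / Real.sqrt k) :
    ∃ C₁ C₂ : ℝ, ∀ m : ℕ, 2 ≤ m →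
      ∀ (β : ℂ) (βs : ℕ → ℂ),
        ‖β - b‖ ≤ c₂ * ϱ ^ (4 * m) →
        (∀ k : ℕ, k ≤ m →
          ‖βs k - bs k‖ ≤
            c₃ * Real.sqrt (((2 * m : ℕ) : ℝ) * Real.log ((2 * m : ℕ) : ℝ)) * ϱ ^ (2 * m)) →
        ∀ w : ℂ, 1 ≤ ‖w‖ →
          ‖(b * w + bs 0 + ∑' k : ℕ, bs (k + 1) * w ^ (-((k : ℤ) + 1))) -
              (β * w + βs 0 + ∑ k ∈ Finset.Icc 1 m, βs k * w ^ (-(k : ℤ)))‖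
            ≤ C₁ * Real.sqrt ((m : ℝ) * Real.log m) * ϱ ^ m +
                C₂ * ‖w‖ * ϱ ^ (4 * m) :=
  recovery_algorithm_estimate_general ϱ hϱ₀ hϱ₁ c₁ c₂ c₃ hc₁ hc₃ b bs hbs
end

section
/- (Lemma 1.1.) For every integer n ≥ 0 there exists a unique polynomial G_n such that z·(Φ(z)^n·Φ'(z) − G_n(z)) → 0 as z → ∞; this G_n has exact degree n with leading coefficient γ^{n+1}; and the function H_n(z) := Φ(z)^n·Φ'(z) − G_n(z) is analytic and square-integrable in Ω, i.e. ∫_Ω |H_n(z)|² dA(z) < ∞, where dA is two-dimensional Lebesgue (area) measure on ℂ. -/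
/-!
Near infinity `Φ z = z Ψ(1/z)` with `Ψ` holomorphic at `0` and `Ψ 0 = γ` (a removable
singularity). Expanding `Ψ ^ (n + 1)` to order `n + 1` splits `Φ(z)^(n+1) = z^(n+1) Ψ(1/z)^(n+1)`
into a polynomial `P` of degree `n + 1` with leading coefficient `γ ^ (n + 1)` and a term
`v(1/z)` with `v` holomorphic at `0`. Differentiating, `G_n = P' / (n + 1)` and
`H_n(z) = -(n + 1)⁻¹ z⁻² v'(1/z) = O(|z|⁻²)`: this gives the limit, the uniqueness (a polynomial
tending to `0` at infinity vanishes) and the square integrability near infinity. On the bounded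
rest of `Ω`, injectivity keeps `Φ` away from the values it takes near infinity, so `Φ` is bounded
there, and `∫ |Φ'|²` is the area of the image of `Φ`.
-/

open MeasureTheory Polynomial Filter Metric Set Function Bornology Topology

section Taylor

variable {𝕜 E : Type*} [NontriviallyNormedField 𝕜] [NormedAddCommGroup E] [NormedSpace 𝕜 E]

theorem eq_sum_iterate_dslope_add (f : 𝕜 → E) (m : ℕ) (w : 𝕜) :
    f w = ∑ k ∈ Finset.range m, w ^ k • (swap dslope 0)^[k] f 0
      + w ^ m • (swap dslope 0)^[m] f w := by
  induction m with
  | zero => simp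
  | succ m ih =>
    have hg (g : 𝕜 → E) : g w = g 0 + w • dslope g 0 w := by
      rw [← sub_eq_iff_eq_add', ← sub_smul_dslope, sub_zero]
    rw [Finset.sum_range_succ, add_assoc, iterate_succ_apply', pow_succ, mul_smul, ← smul_add]
    exact ih.trans (by rw [← hg])

end Taylor

theorem DifferentiableOn.iterate_swap_dslope {E : Type*} [NormedAddCommGroup E]
    [NormedSpace ℂ E] [CompleteSpace E] {f : ℂ → E} {s : Set ℂ} (hs : s ∈ 𝓝 0)
    (hf : DifferentiableOn ℂ f s) (m : ℕ) :
    DifferentiableOn ℂ ((swap dslope 0)^[m] f) s := by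
  induction m with
  | zero => exact hf
  | succ m ih => rw [iterate_succ_apply']; exact (Complex.differentiableOn_dslope hs).mpr ih

theorem exists_eq_eval_add_comp_inv {F : ℂ → ℂ} {s : Set ℂ} (hs : s ∈ 𝓝 0)
    (hF : DifferentiableOn ℂ F s) (m : ℕ) :
    ∃ P : ℂ[X], ∃ v : ℂ → ℂ, P.degree ≤ m ∧ P.coeff m = F 0 ∧ DifferentiableOn ℂ v s ∧
      ∀ z ≠ 0, z ^ m * F z⁻¹ = P.eval z + v z⁻¹ := by
  set c : ℕ → ℂ := fun k => (swap dslope 0)^[k] F 0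
  set g := (swap dslope 0)^[m + 1] F
  refine ⟨∑ k ∈ Finset.range (m + 1), C (c k) * X ^ (m - k), fun w => w * g w, ?_, ?_, ?_, ?_⟩
  · refine (degree_sum_le _ _).trans (Finset.sup_le fun k _ => ?_)
    exact degree_C_mul_X_pow_le _ _ |>.trans (by exact_mod_cast Nat.sub_le m k)
  · rw [finsetSum_coeff, Finset.sum_eq_single 0]
    · simp [c]
    · intro k hk hk0
      rw [coeff_C_mul_X_pow, if_neg (by simp at hk; omega)]
    · simp
  · exact differentiableOn_id.mul (hF.iterate_swap_dslope hs _)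
  · intro z hz
    rw [eq_sum_iterate_dslope_add F (m + 1) z⁻¹, mul_add, Finset.mul_sum, eval_finsetSum]
    congr 1
    · refine Finset.sum_congr rfl fun k hk => ?_
      rw [Finset.mem_range] at hk
      simp only [smul_eq_mul, eval_mul, eval_C, eval_pow, eval_X, c, inv_pow,
        pow_sub₀ z hz (by omega : k ≤ m)]
      ring
    · simp only [smul_eq_mul, g]
      rw [← mul_assoc, inv_pow, pow_succ, mul_inv, ← mul_assoc,
        mul_inv_cancel₀ (pow_ne_zero m hz), one_mul]

theorem differentiableOn_update_comp_inv {E : Type*} [NormedAddCommGroup E] [NormedSpace ℂ E]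
    [CompleteSpace E] {h : ℂ → E} {R : ℝ} {L : E}
    (hd : DifferentiableOn ℂ h {z | R < ‖z‖}) (hlim : Tendsto h (cobounded ℂ) (𝓝 L)) :
    DifferentiableOn ℂ (update (fun w => h w⁻¹) 0 L) (ball 0 R⁻¹) := by
  rcases le_or_gt R 0 with hR | hR
  · simp [ball_eq_empty.mpr (inv_nonpos.mpr hR), differentiableOn_empty]
  refine (Complex.differentiableOn_compl_singleton_and_continuousAt_iff
    (ball_mem_nhds 0 (inv_pos.mpr hR))).mp ⟨fun w ⟨hwr, hw0⟩ => ?_, ?_⟩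
  · have hw0 : w ≠ 0 := hw0
    have hRw : R < ‖w⁻¹‖ := by
      rw [mem_ball_zero_iff] at hwr
      rw [norm_inv]; exact (lt_inv_comm₀ (norm_pos_iff.mpr hw0) hR).mp hwr
    have hcomp : DifferentiableAt ℂ (fun w => h w⁻¹) w :=
      ((hd _ hRw).differentiableAt
        ((isOpen_lt continuous_const continuous_norm).mem_nhds hRw)).comp w
        (differentiableAt_inv hw0)
    refine (hcomp.congr_of_eventuallyEq ?_).differentiableWithinAt
    filter_upwards [compl_singleton_mem_nhds hw0] with z hz using update_of_ne hz _ _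
  · rw [← continuousWithinAt_compl_self, ContinuousWithinAt, update_self]
    refine (hlim.comp tendsto_inv₀_nhdsNE_zero).congr' ?_
    filter_upwards [self_mem_nhdsWithin] with w hw using (update_of_ne hw _ _).symm

theorem exists_eq_mul_comp_inv_of_tendsto_div {Φ : ℂ → ℂ} {R : ℝ} {L : ℂ} (hR : 0 ≤ R)
    (hΦ : ∀ z, R < ‖z‖ → DifferentiableAt ℂ Φ z)
    (hlim : Tendsto (fun z => Φ z / z) (cobounded ℂ) (𝓝 L)) :
    ∃ Ψ : ℂ → ℂ, DifferentiableOn ℂ Ψ (ball 0 R⁻¹) ∧ Ψ 0 = L ∧ ∀ z ≠ 0, Φ z = z * Ψ z⁻¹ := by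
  refine ⟨update (fun w => Φ w⁻¹ / w⁻¹) 0 L,
    differentiableOn_update_comp_inv (fun z hz => ?_) hlim, update_self _ _ _, fun z hz => ?_⟩
  · exact ((hΦ z hz).div differentiableAt_id
      (norm_pos_iff.mp (hR.trans_lt hz))).differentiableWithinAt
  · simp [hz]
    field_simp

theorem hasDerivAt_eval_add_comp_inv (P : ℂ[X]) {v : ℂ → ℂ} {z : ℂ} (hz : z ≠ 0)
    (hv : DifferentiableAt ℂ v z⁻¹) :
    HasDerivAt (fun z => P.eval z + v z⁻¹)
      ((derivative P).eval z - z⁻¹ ^ 2 * deriv v z⁻¹) z := by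
  refine ((P.hasDerivAt z).add (hv.hasDerivAt.comp z (hasDerivAt_inv hz))).congr_deriv ?_
  rw [inv_pow]; ring

theorem pow_mul_deriv_sub_eval_eq {f v : ℂ → ℂ} {P : ℂ[X]} {m : ℕ} {z : ℂ} (hz : z ≠ 0)
    (hf : DifferentiableAt ℂ f z) (hv : DifferentiableAt ℂ v z⁻¹)
    (hfPv : ∀ z ≠ 0, f z ^ (m + 1) = P.eval z + v z⁻¹) :
    f z ^ m * deriv f z - (C ((m : ℂ) + 1)⁻¹ * derivative P).eval z
      = z⁻¹ ^ 2 * -(((m : ℂ) + 1)⁻¹ * deriv v z⁻¹) := by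
  have hpow : HasDerivAt (fun z => f z ^ (m + 1)) (((m : ℂ) + 1) * f z ^ m * deriv f z) z := by
    refine (hf.hasDerivAt.pow (m + 1)).congr_deriv ?_
    push_cast; simp
  have heq : (fun z => f z ^ (m + 1)) =ᶠ[𝓝 z] fun z => P.eval z + v z⁻¹ := by
    filter_upwards [compl_singleton_mem_nhds hz] with y hy using hfPv y hy
  have := (hpow.congr_of_eventuallyEq heq.symm).unique (hasDerivAt_eval_add_comp_inv P hz hv)
  have hfm : f z ^ m * deriv f z
      = ((m : ℂ) + 1)⁻¹ * ((derivative P).eval z - z⁻¹ ^ 2 * deriv v z⁻¹) := by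
    rw [← this]; field_simp
  rw [eval_mul, eval_C, hfm]
  ring

namespace Polynomial

variable {K : Type*} [Field K] [CharZero K]

theorem coeff_C_inv_mul_derivative (P : K[X]) (m : ℕ) :
    (C ((m : K) + 1)⁻¹ * derivative P).coeff m = P.coeff (m + 1) := by
  rw [coeff_C_mul, coeff_derivative, mul_comm, mul_assoc,
    mul_inv_cancel₀ (Nat.cast_add_one_ne_zero m), mul_one]

theorem degree_C_inv_mul_derivative {P : K[X]} {m : ℕ} (hP : P.degree = ↑(m + 1)) :
    (C ((m : K) + 1)⁻¹ * derivative P).degree = m := by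
  have hnat : P.natDegree = m + 1 := natDegree_eq_of_degree_eq_some hP
  rw [degree_C_mul (inv_ne_zero (Nat.cast_add_one_ne_zero m)), degree_derivative (by omega),
    hnat, Nat.add_sub_cancel]

theorem eq_zero_of_tendsto_cobounded {𝕜 : Type*} [NontriviallyNormedField 𝕜] {p : 𝕜[X]}
    (h : Tendsto p.eval (cobounded 𝕜) (𝓝 0)) : p = 0 := by
  by_cases hdeg : 0 < p.degree
  · have := p.tendsto_norm_atTop hdeg tendsto_norm_cobounded_atTop
    exact absurd (h.norm.trans (by simp)) (not_tendsto_nhds_of_tendsto_atTop this 0)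
  · rw [eq_C_of_degree_le_zero (not_lt.mp hdeg)] at h ⊢
    simpa using h

theorem eq_of_tendsto_mul_sub_eval {𝕜 : Type*} [NontriviallyNormedField 𝕜] {f : 𝕜 → 𝕜}
    {p q : 𝕜[X]} (hp : Tendsto (fun z => z * (f z - p.eval z)) (cobounded 𝕜) (𝓝 0))
    (hq : Tendsto (fun z => z * (f z - q.eval z)) (cobounded 𝕜) (𝓝 0)) : p = q := by
  refine sub_eq_zero.mp (eq_zero_of_tendsto_cobounded ?_)
  have := (hq.sub hp).mul tendsto_inv₀_cobounded
  rw [sub_zero, zero_mul] at this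
  refine this.congr' ?_
  filter_upwards [eventually_ne_cobounded 0] with z hz0
  simp only [eval_sub]
  field_simp
  ring

end Polynomial

theorem exists_pow_mul_deriv_sub_eval_eq_inv_sq_mul {Φ Ψ : ℂ → ℂ} {R : ℝ} (hR : 0 < R)
    (hΦ : ∀ z, R < ‖z‖ → DifferentiableAt ℂ Φ z) (hΨ : DifferentiableOn ℂ Ψ (ball 0 R⁻¹))
    (hΨ0 : Ψ 0 ≠ 0) (hΦΨ : ∀ z ≠ 0, Φ z = z * Ψ z⁻¹) (n : ℕ) :
    ∃ Gn : ℂ[X], ∃ K : ℂ → ℂ, Gn.degree = n ∧ Gn.coeff n = Ψ 0 ^ (n + 1) ∧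
      ContinuousOn K (ball 0 R⁻¹) ∧
      ∀ z, R < ‖z‖ → Φ z ^ n * deriv Φ z - Gn.eval z = z⁻¹ ^ 2 * K z⁻¹ := by
  obtain ⟨P, v, hPdeg, hPcoeff, hv, hPv⟩ := exists_eq_eval_add_comp_inv
    (F := fun w => Ψ w ^ (n + 1)) (ball_mem_nhds 0 (inv_pos.mpr hR)) (hΨ.pow (n + 1)) (n + 1)
  have hP : P.degree = ↑(n + 1) :=
    degree_eq_of_le_of_coeff_ne_zero hPdeg (hPcoeff ▸ pow_ne_zero _ hΨ0)
  refine ⟨C ((n : ℂ) + 1)⁻¹ * derivative P, fun w => -(((n : ℂ) + 1)⁻¹ * deriv v w),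
    degree_C_inv_mul_derivative hP, (coeff_C_inv_mul_derivative P n).trans hPcoeff,
    ((hv.deriv isOpen_ball).continuousOn.const_mul _).neg, fun z hz => ?_⟩
  have hz0 : z ≠ 0 := norm_pos_iff.mp (hR.trans hz)
  refine pow_mul_deriv_sub_eval_eq hz0 (hΦ z hz) (hv.differentiableAt (isOpen_ball.mem_nhds ?_))
    fun z hz => by rw [hΦΨ z hz, mul_pow, hPv z hz]
  rw [mem_ball_zero_iff, norm_inv]
  exact inv_strictAnti₀ hR hz

theorem tendsto_mul_of_eventually_eq_inv_sq_mul {f K : ℂ → ℂ} (hK : ContinuousAt K 0)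
    (hf : ∀ᶠ z in cobounded ℂ, f z = z⁻¹ ^ 2 * K z⁻¹) :
    Tendsto (fun z => z * f z) (cobounded ℂ) (𝓝 0) := by
  have hcont : ContinuousAt (fun w => w * K w) 0 := continuousAt_id.mul hK
  have hlim : Tendsto (fun w => w * K w) (𝓝 0) (𝓝 0) := by simpa using hcont.tendsto
  refine (hlim.comp tendsto_inv₀_cobounded).congr' ?_
  filter_upwards [hf, eventually_ne_cobounded 0] with z hfz hz0
  rw [comp_apply, hfz]
  field_simp

theorem image_mem_cobounded_of_eq_mul_comp_inv {f Ψ : ℂ → ℂ} (hΨ : AnalyticAt ℂ Ψ 0)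
    (hΨ0 : Ψ 0 ≠ 0) (hf : ∀ᶠ z in cobounded ℂ, f z = z * Ψ z⁻¹) {U : Set ℂ}
    (hU : U ∈ cobounded ℂ) : f '' U ∈ cobounded ℂ := by
  -- `w ↦ w / Ψ w`, which is `1 / f (1 / w)` near `0`, is a local diffeomorphism at `0`.
  have hη : HasStrictDerivAt (fun w => w / Ψ w) (Ψ 0)⁻¹ 0 := by
    have hd : HasDerivAt (fun w => w / Ψ w) (Ψ 0)⁻¹ 0 := by
      refine ((hasDerivAt_id' (0 : ℂ)).div hΨ.differentiableAt.hasDerivAt hΨ0).congr_deriv ?_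
      field_simp; ring
    have hs : HasStrictDerivAt (fun w => w / Ψ w) (deriv (fun w => w / Ψ w) 0) 0 :=
      AnalyticAt.hasStrictDerivAt (analyticAt_id.div hΨ hΨ0)
    rwa [hd.deriv] at hs
  have hV : ∀ᶠ w in 𝓝 0, w ≠ 0 → w⁻¹ ∈ U ∧ f w⁻¹ = w⁻¹ * Ψ w := by
    refine eventually_nhdsWithin_iff.mp ?_
    filter_upwards [tendsto_inv₀_nhdsNE_zero.eventually
      ((show ∀ᶠ z in cobounded ℂ, z ∈ U from hU).and hf)] with w hw
    rwa [inv_inv] at hw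
  have hηV := image_mem_map (m := fun w => w / Ψ w) hV
  rw [hη.map_nhds_eq (inv_ne_zero hΨ0), zero_div] at hηV
  filter_upwards [tendsto_inv₀_cobounded.eventually hηV, eventually_ne_cobounded 0]
    with y ⟨w, hw, hwy⟩ hy0
  have hw0 : w ≠ 0 := by
    rintro rfl
    exact inv_ne_zero hy0 (by simpa using hwy.symm)
  obtain ⟨hwU, hfw⟩ := hw hw0
  refine ⟨w⁻¹, hwU, ?_⟩
  rw [hfw, ← inv_inv y, ← hwy, inv_div, div_eq_inv_mul]

theorem isBounded_image_sdiff_of_image_mem_cobounded {α β : Type*} [Bornology β] {f : α → β}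
    {s U : Set α} (hf : InjOn f s) (hU : U ⊆ s) (hfU : f '' U ∈ cobounded β) :
    IsBounded (f '' (s \ U)) := by
  refine (isBounded_compl_iff.mpr hfU).subset ?_
  rw [hf.image_sdiff, inter_eq_right.mpr hU]
  exact sdiff_subset_compl _ _

theorem lintegral_norm_deriv_sq_eq_volume_image {f : ℂ → ℂ} {s : Set ℂ} (hs : MeasurableSet s)
    (hf : ∀ z ∈ s, DifferentiableAt ℂ f z) (hinj : InjOn f s) :
    ∫⁻ z in s, ENNReal.ofReal (‖deriv f z‖ ^ 2) = volume (f '' s) := by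
  have hf' : ∀ z ∈ s, HasFDerivWithinAt f
      ((ContinuousLinearMap.toSpanSingleton ℂ (deriv f z)).restrictScalars ℝ) s z := fun z hz =>
    ((hf z hz).hasDerivAt.hasFDerivAt.restrictScalars ℝ).hasFDerivWithinAt
  rw [← lintegral_abs_det_fderiv_eq_addHaar_image volume hs hf' hinj]
  congr! with z
  -- the real Jacobian of multiplication by `c` is `|c|²`
  simp [ContinuousLinearMap.det, LinearMap.det_restrictScalars, Algebra.norm_complex_eq,
    Complex.normSq_eq_norm_sq]

theorem integrableOn_norm_deriv_sq_of_injOn {f : ℂ → ℂ} {s : Set ℂ} (hs : MeasurableSet s)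
    (hf : ∀ z ∈ s, DifferentiableAt ℂ f z) (hinj : InjOn f s) (hfs : IsBounded (f '' s)) :
    IntegrableOn (fun z => ‖deriv f z‖ ^ 2) s := by
  refine ⟨((measurable_deriv f).norm.pow_const 2).aestronglyMeasurable, ?_⟩
  rw [hasFiniteIntegral_iff_ofReal (ae_of_all _ fun z => by positivity),
    lintegral_norm_deriv_sq_eq_volume_image hs hf hinj]
  exact hfs.measure_lt_top

theorem integrableOn_norm_sq_pow_mul_deriv_sub_eval_of_isBounded {f : ℂ → ℂ} {s : Set ℂ}
    (hs : MeasurableSet s) (hsb : IsBounded s) (hf : ∀ z ∈ s, DifferentiableAt ℂ f z)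
    (hinj : InjOn f s) (hfs : IsBounded (f '' s)) (n : ℕ) (Q : ℂ[X]) :
    IntegrableOn (fun z => ‖f z ^ n * deriv f z - Q.eval z‖ ^ 2) s := by
  have : IsFiniteMeasure (volume.restrict s) :=
    isFiniteMeasure_restrict.mpr hsb.measure_lt_top.ne
  obtain ⟨M, -, hM⟩ := hfs.exists_pos_norm_le
  have hcont : ContinuousOn f s := fun z hz => (hf z hz).continuousAt.continuousWithinAt
  have hderiv : MemLp (deriv f) 2 (volume.restrict s) :=
    (memLp_two_iff_integrable_sq_norm (measurable_deriv f).aestronglyMeasurable).mpr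
      (integrableOn_norm_deriv_sq_of_injOn hs hf hinj hfs)
  have hmain : MemLp (fun z => f z ^ n * deriv f z) 2 (volume.restrict s) := by
    refine hderiv.of_le_mul (c := M ^ n) (((hcont.pow n).aestronglyMeasurable hs).mul
      (measurable_deriv f).aestronglyMeasurable) ?_
    refine (ae_restrict_iff' hs).mpr (ae_of_all _ fun z hz => ?_)
    rw [norm_mul, norm_pow]
    gcongr
    exact hM _ (mem_image_of_mem f hz)
  obtain ⟨C, hC⟩ := hsb.isCompact_closure.exists_bound_of_continuousOn
    Q.continuous.continuousOn
  have hQ : MemLp (fun z => Q.eval z) 2 (volume.restrict s) :=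
    MemLp.of_bound Q.continuous.aestronglyMeasurable C
      ((ae_restrict_iff' hs).mpr (ae_of_all _ fun z hz => hC z (subset_closure hz)))
  exact (memLp_two_iff_integrable_sq_norm (hmain.sub hQ).1).mp (hmain.sub hQ)

theorem integrableOn_norm_sq_of_eq_inv_sq_mul {f K : ℂ → ℂ} {R : ℝ} (hR : 0 < R)
    (hK : ContinuousOn K (closedBall 0 R⁻¹)) (hf : ∀ z, R < ‖z‖ → f z = z⁻¹ ^ 2 * K z⁻¹) :
    IntegrableOn (fun z => ‖f z‖ ^ 2) {z | R < ‖z‖} := by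
  set S : Set ℂ := {z | R < ‖z‖}
  have hS : MeasurableSet S := (isOpen_lt continuous_const continuous_norm).measurableSet
  have hS0 : ∀ z ∈ S, z ≠ 0 := fun z hz => norm_pos_iff.mp (hR.trans hz)
  have hinv : ∀ z ∈ S, ‖z‖⁻¹ ≤ R⁻¹ := fun z hz => inv_anti₀ hR (le_of_lt hz)
  obtain ⟨C, hC⟩ := (isCompact_closedBall 0 R⁻¹).exists_bound_of_continuousOn hK
  have hcont : ContinuousOn f S := by
    refine ContinuousOn.congr ?_ fun z hz => hf z hz
    have hi : ContinuousOn (fun z : ℂ => z⁻¹) S := continuousOn_inv₀.mono fun z hz => hS0 z hz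
    refine (hi.pow 2).mul (hK.comp hi fun z hz => ?_)
    simpa [norm_inv] using hinv z hz
  have hbound : ∀ z ∈ S, ‖f z‖ ^ 2 ≤ C ^ 2 * (1 + R⁻¹) ^ 4 * (1 + ‖z‖) ^ (-4 : ℝ) := by
    intro z hzS
    have hz : 0 < ‖z‖ := hR.trans hzS
    have h1 : ‖f z‖ ≤ C * ‖z‖⁻¹ ^ 2 := by
      rw [hf z hzS, norm_mul, norm_pow, norm_inv, mul_comm]
      gcongr
      exact hC _ (by simpa [norm_inv] using hinv z hzS)
    have h2 : ‖z‖⁻¹ ≤ (1 + R⁻¹) * (1 + ‖z‖)⁻¹ := by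
      rw [← div_eq_mul_inv, le_div_iff₀ (by positivity), inv_mul_le_iff₀ hz]
      nlinarith [mul_inv_cancel₀ hR.ne', (show R < ‖z‖ from hzS).le]
    rw [Real.rpow_neg (by positivity), show ((4 : ℝ)) = ((4 : ℕ) : ℝ) by norm_num,
      Real.rpow_natCast, ← inv_pow]
    calc ‖f z‖ ^ 2 ≤ (C * ‖z‖⁻¹ ^ 2) ^ 2 := by gcongr
      _ = C ^ 2 * (‖z‖⁻¹) ^ 4 := by ring
      _ ≤ C ^ 2 * ((1 + R⁻¹) * (1 + ‖z‖)⁻¹) ^ 4 := by gcongr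
      _ = _ := by ring
  have hint : Integrable fun z : ℂ => C ^ 2 * (1 + R⁻¹) ^ 4 * (1 + ‖z‖) ^ (-4 : ℝ) :=
    (integrable_one_add_norm (by norm_num [Complex.finrank_real_complex])).const_mul _
  refine hint.integrableOn.mono' ((hcont.norm.pow 2).aestronglyMeasurable hS) ?_
  refine (ae_restrict_iff' hS).mpr (ae_of_all _ fun z hz => ?_)
  rw [Real.norm_of_nonneg (by positivity)]
  exact hbound z hz

theorem integrableOn_norm_sq_pow_mul_deriv_sub_eval {Ω : Set ℂ} {Φ Ψ K : ℂ → ℂ} {R : ℝ}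
    {Q : ℂ[X]} {n : ℕ} (hR : 0 < R) (hΩ : MeasurableSet Ω) (hext : {z | R < ‖z‖} ⊆ Ω)
    (hΦ : ∀ z ∈ Ω, DifferentiableAt ℂ Φ z) (hinj : InjOn Φ Ω) (hΨ : AnalyticAt ℂ Ψ 0)
    (hΨ0 : Ψ 0 ≠ 0) (hΦΨ : ∀ z ≠ 0, Φ z = z * Ψ z⁻¹) (hK : ContinuousOn K (ball 0 R⁻¹))
    (hH : ∀ z, R < ‖z‖ → Φ z ^ n * deriv Φ z - Q.eval z = z⁻¹ ^ 2 * K z⁻¹) :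
    IntegrableOn (fun z => ‖Φ z ^ n * deriv Φ z - Q.eval z‖ ^ 2) Ω := by
  set U := {z : ℂ | 2 * R < ‖z‖}
  have hUΩ : U ⊆ Ω := fun z hz => hext (by simp only [U, mem_ofPred_eq] at hz ⊢; linarith)
  have hΦU : Φ '' U ∈ cobounded ℂ :=
    image_mem_cobounded_of_eq_mul_comp_inv hΨ hΨ0 ((eventually_ne_cobounded 0).mono hΦΨ)
      (tendsto_norm_cobounded_atTop.eventually_gt_atTop (2 * R))
  have hinner := integrableOn_norm_sq_pow_mul_deriv_sub_eval_of_isBounded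
    (hΩ.diff (isOpen_lt continuous_const continuous_norm).measurableSet)
    ((isBounded_closedBall (x := 0) (r := 2 * R)).subset fun z hz => by simpa [U] using hz.2)
    (fun z hz => hΦ z hz.1) (hinj.mono sdiff_subset)
    (isBounded_image_sdiff_of_image_mem_cobounded hinj hUΩ hΦU) n Q
  have houter := integrableOn_norm_sq_of_eq_inv_sq_mul (R := 2 * R) (by positivity)
    (hK.mono (closedBall_subset_ball (inv_strictAnti₀ hR (by linarith))))
    fun z hz => hH z (by linarith)
  exact sdiff_union_of_subset hUΩ ▸ hinner.union houter

theorem faber_second_kind_remainder_general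
    (G : Set ℂ) (hGb : Bornology.IsBounded G)
    (Ω : Set ℂ) (hΩ : Ω = (closure G)ᶜ)
    (Φ : ℂ → ℂ) (γ : ℝ) (hγ : 0 < γ)
    (hΦa : AnalyticOnNhd ℂ Φ Ω)
    (hΦi : Set.InjOn Φ Ω)
    (hΦinf : Tendsto (fun z : ℂ => Φ z / z) (Bornology.cobounded ℂ) (nhds (γ : ℂ)))
    (n : ℕ) :
    ∃ Gn : Polynomial ℂ,
      Tendsto (fun z : ℂ => z * (Φ z ^ n * deriv Φ z - Gn.eval z))
        (Bornology.cobounded ℂ) (nhds 0) ∧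
      (∀ Q : Polynomial ℂ,
        Tendsto (fun z : ℂ => z * (Φ z ^ n * deriv Φ z - Q.eval z))
          (Bornology.cobounded ℂ) (nhds 0) → Q = Gn) ∧
      Gn.degree = n ∧
      Gn.coeff n = (γ : ℂ) ^ (n + 1) ∧
      AnalyticOnNhd ℂ (fun z : ℂ => Φ z ^ n * deriv Φ z - Gn.eval z) Ω ∧
      IntegrableOn (fun z : ℂ => ‖Φ z ^ n * deriv Φ z - Gn.eval z‖ ^ 2) Ω := by
  obtain ⟨R, hR, hGR⟩ := hGb.closure.subset_ball_lt 0 0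
  have hext : {z : ℂ | R < ‖z‖} ⊆ Ω := fun z hz => by
    rw [hΩ]
    exact fun hzG => (mem_ball_zero_iff.mp (hGR hzG)).not_gt hz
  have hΦd : ∀ z, R < ‖z‖ → DifferentiableAt ℂ Φ z := fun z hz =>
    (hΦa z (hext hz)).differentiableAt
  obtain ⟨Ψ, hΨ, hΨγ, hΦΨ⟩ := exists_eq_mul_comp_inv_of_tendsto_div hR.le hΦd hΦinf
  have hΨ0 : Ψ 0 ≠ 0 := hΨγ ▸ Complex.ofReal_ne_zero.mpr hγ.ne'
  obtain ⟨Gn, K, hdeg, hcoeff, hK, hH⟩ :=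
    exists_pow_mul_deriv_sub_eval_eq_inv_sq_mul hR hΦd hΨ hΨ0 hΦΨ n
  have hball : ball (0 : ℂ) R⁻¹ ∈ 𝓝 0 := ball_mem_nhds 0 (inv_pos.mpr hR)
  have htendsto := tendsto_mul_of_eventually_eq_inv_sq_mul (hK.continuousAt hball)
    ((tendsto_norm_cobounded_atTop.eventually_gt_atTop R).mono hH)
  refine ⟨Gn, htendsto, fun Q hQ => eq_of_tendsto_mul_sub_eval hQ htendsto, hdeg, hΨγ ▸ hcoeff,
    fun z hz => (((hΦa z hz).pow n).mul (hΦa.deriv z hz)).sub (Gn.differentiable.analyticAt z),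
    ?_⟩
  exact integrableOn_norm_sq_pow_mul_deriv_sub_eval hR
    (hΩ ▸ isClosed_closure.isOpen_compl.measurableSet) hext
    (fun z hz => (hΦa z hz).differentiableAt) hΦi (hΨ.analyticAt hball) hΨ0 hΦΨ hK hH

/-- Lemma 1.1: for every `n ≥ 0` there is a unique polynomial `G_n` with
`z·(Φ(z)^n·Φ'(z) − G_n(z)) → 0` as `z → ∞`; it has exact degree `n` with leading
coefficient `γ^{n+1}`, and `H_n := Φ^n·Φ' − G_n` is analytic and square-integrable on `Ω`. -/
theorem faber_second_kind_remainder
    (G : Set ℂ) (hG : G.Nonempty) (hGo : IsOpen G) (hGb : Bornology.IsBounded G)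
    (hGc : IsConnected G)
    (Ω : Set ℂ) (hΩ : Ω = (closure G)ᶜ)
    (Φ : ℂ → ℂ) (γ : ℝ) (hγ : 0 < γ)
    (hΦa : AnalyticOnNhd ℂ Φ Ω)
    (hΦi : Set.InjOn Φ Ω)
    (hΦim : Φ '' Ω = {w : ℂ | 1 < ‖w‖})
    (hΦinf : Tendsto (fun z : ℂ => Φ z / z) (Bornology.cobounded ℂ) (nhds (γ : ℂ)))
    (n : ℕ) :
    ∃ Gn : Polynomial ℂ,
      Tendsto (fun z : ℂ => z * (Φ z ^ n * deriv Φ z - Gn.eval z))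
        (Bornology.cobounded ℂ) (nhds 0) ∧
      (∀ Q : Polynomial ℂ,
        Tendsto (fun z : ℂ => z * (Φ z ^ n * deriv Φ z - Q.eval z))
          (Bornology.cobounded ℂ) (nhds 0) → Q = Gn) ∧
      Gn.degree = n ∧
      Gn.coeff n = (γ : ℂ) ^ (n + 1) ∧
      AnalyticOnNhd ℂ (fun z : ℂ => Φ z ^ n * deriv Φ z - Gn.eval z) Ω ∧
      IntegrableOn (fun z : ℂ => ‖Φ z ^ n * deriv Φ z - Gn.eval z‖ ^ 2) Ω :=
  faber_second_kind_remainder_general G hGb Ω hΩ Φ γ hγ hΦa hΦi hΦinf n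
end
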